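/- arXiv:1903.01422 — 6 statements merged into one kernel-verified Lean document; each statement's English description precedes it below -/
import Mathlib

section
/- Fix n ∈ ℕ, ρ ∈ ℝ with −1 < ρ < 1, and permutations σ₁ σ₂ : Equiv.Perm (Fin n). For m : Equiv.Perm (Fin n), define the density p_m : (Fin n → ℝ) × (Fin n → ℝ) → ℝ by p_m(a, b) := (2 * π * Real.sqrt (1 − ρ^2))^(−n) * Real.exp (−(∑ u, (a u)^2 + ∑ v, (b v)^2 − 2 * ρ * ∑ u, a u * b (m u)) / (2 * (1 − ρ^2))). Then ∫ over (Fin n → ℝ) × (Fin n → ℝ) (with respect to Lebesgue measure on ℝ^{2n}) of Real.sqrt (p_{σ₁}(a,b) * p_{σ₂}(a,b)) equals Real.sqrt ((1 − ρ^2)^n / Matrix.det D), where D := Matrix.fromBlocks 1 (−(ρ/2) • (P_{σ₁} + P_{σ₂})) (−(ρ/2) • (P_{σ₁} + P_{σ₂}))ᵀ 1. -/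
open Matrix MeasureTheory Real

lemma integral_exp_neg_dot {ι : Type*} [Fintype ι] [DecidableEq ι] :
    ∫ y : ι → ℝ, Real.exp (-(y ⬝ᵥ y)) = Real.sqrt π ^ Fintype.card ι := by
  have h : ∀ y : ι → ℝ, Real.exp (-(y ⬝ᵥ y)) = ∏ i, Real.exp (-1 * (y i) ^ 2) := by
    intro y
    rw [← Real.exp_sum]
    congr 1
    simp [dotProduct, ← Finset.sum_neg_distrib, sq]
  simp_rw [h]
  rw [volume_pi, integral_fintype_prod_eq_pow (ι := ι) (fun t : ℝ => Real.exp (-1 * t ^ 2)), integral_gaussian]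
  norm_num

lemma posSemidef_det_nonneg {ι : Type*} [Fintype ι] [DecidableEq ι] {A : Matrix ι ι ℝ}
    (hA : A.PosSemidef) : 0 ≤ A.det := by
  rw [hA.isHermitian.det_eq_prod_eigenvalues]
  exact Finset.prod_nonneg fun i _ => hA.eigenvalues_nonneg i

lemma integral_exp_neg_quadForm {ι : Type*} [Fintype ι] [DecidableEq ι]
    {M : Matrix ι ι ℝ} (hM : M.PosDef) :
    ∫ x : ι → ℝ, Real.exp (-(x ⬝ᵥ M *ᵥ x)) =
      Real.sqrt (π ^ Fintype.card ι / M.det) := by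
  obtain ⟨A, hAps, hAA⟩ : ∃ A : Matrix ι ι ℝ, A.PosSemidef ∧ A * A = M := by
    open scoped MatrixOrder in
    exact ⟨CFC.sqrt M, Matrix.nonneg_iff_posSemidef.mp (CFC.sqrt_nonneg M),
      CFC.sqrt_mul_sqrt_self M (Matrix.nonneg_iff_posSemidef.mpr hM.posSemidef)⟩
  have hAH : A.IsHermitian := hAps.isHermitian
  have hdetM : 0 < M.det := hM.det_pos
  have hdet2 : A.det * A.det = M.det := by rw [← Matrix.det_mul, hAA]
  have hdetA_nonneg : 0 ≤ A.det := posSemidef_det_nonneg hAps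
  have hdetA : 0 < A.det := by
    rcases lt_or_eq_of_le hdetA_nonneg with h | h
    · exact h
    · exfalso; rw [← h] at hdet2; nlinarith
  have hAt : Aᵀ = A := by
    rw [← Matrix.conjTranspose_eq_transpose_of_trivial, hAH.eq]
  have hquad : ∀ x : ι → ℝ, x ⬝ᵥ M *ᵥ x = (A *ᵥ x) ⬝ᵥ (A *ᵥ x) := by
    intro x
    have h2 : x ᵥ* A = A *ᵥ x := by
      have := Matrix.vecMul_transpose A x
      rwa [hAt] at this
    rw [← hAA, ← Matrix.mulVec_mulVec, Matrix.dotProduct_mulVec, h2]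
  have hmap : Measure.map (Matrix.toLin' A) volume
      = ENNReal.ofReal |A.det⁻¹| • volume :=
    Real.map_matrix_volume_pi_eq_smul_volume_pi hdetA.ne'
  have hcont : Continuous fun y : ι → ℝ => Real.exp (-(y ⬝ᵥ y)) := by
    apply Real.continuous_exp.comp
    apply Continuous.neg
    exact continuous_finset_sum _ fun i _ => (continuous_apply i).mul (continuous_apply i)
  have hmeas : AEMeasurable (Matrix.toLin' A) (volume : Measure (ι → ℝ)) :=
    (LinearMap.continuous_of_finiteDimensional _).measurable.aemeasurable
  calc ∫ x : ι → ℝ, Real.exp (-(x ⬝ᵥ M *ᵥ x))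
      = ∫ x : ι → ℝ, (fun y => Real.exp (-(y ⬝ᵥ y))) (Matrix.toLin' A x) := by
        simp_rw [hquad, Matrix.toLin'_apply]
    _ = ∫ y, Real.exp (-(y ⬝ᵥ y)) ∂(Measure.map (Matrix.toLin' A) volume) := by
        rw [integral_map hmeas (hcont.aestronglyMeasurable)]
    _ = |A.det⁻¹| * ∫ y : ι → ℝ, Real.exp (-(y ⬝ᵥ y)) := by
        rw [hmap, integral_smul_measure, ENNReal.toReal_ofReal (by positivity), smul_eq_mul]
    _ = Real.sqrt (π ^ Fintype.card ι / M.det) := by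
        have hsp : Real.sqrt (π ^ Fintype.card ι) = Real.sqrt π ^ Fintype.card ι := by
          rw [show π ^ Fintype.card ι = (Real.sqrt π ^ Fintype.card ι) ^ 2 by
            rw [← pow_mul, mul_comm, pow_mul, Real.sq_sqrt pi_nonneg],
            Real.sqrt_sq (by positivity)]
        rw [integral_exp_neg_dot, abs_inv, abs_of_pos hdetA,
          Real.sqrt_div (by positivity) M.det, ← hdet2,
          Real.sqrt_mul_self hdetA_nonneg, hsp]
        ring

lemma quad_eval (n : ℕ) (ρ : ℝ) (σ₁ σ₂ : Equiv.Perm (Fin n)) (x : Fin n ⊕ Fin n → ℝ) :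
    x ⬝ᵥ (Matrix.fromBlocks 1
            (-(ρ/2) • (σ₁.permMatrix ℝ + σ₂.permMatrix ℝ))
            (-(ρ/2) • (σ₁.permMatrix ℝ + σ₂.permMatrix ℝ))ᵀ 1) *ᵥ x
      = ∑ u, (x (.inl u))^2 + ∑ v, (x (.inr v))^2
        - ρ * ∑ u, x (.inl u) * (x (.inr (σ₁ u)) + x (.inr (σ₂ u))) := by
  set D := Matrix.fromBlocks 1
            (-(ρ/2) • (σ₁.permMatrix ℝ + σ₂.permMatrix ℝ))
            (-(ρ/2) • (σ₁.permMatrix ℝ + σ₂.permMatrix ℝ))ᵀ (1 : Matrix (Fin n) (Fin n) ℝ)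
    with hD
  have h1 : ∀ u, (D *ᵥ x) (Sum.inl u)
      = x (.inl u) - ρ/2 * (x (.inr (σ₁ u)) + x (.inr (σ₂ u))) := by
    intro u
    simp only [hD, Matrix.mulVec, dotProduct, Fintype.sum_sum_type,
      Matrix.fromBlocks_apply₁₁, Matrix.fromBlocks_apply₁₂, Matrix.one_apply,
      Matrix.smul_apply, Matrix.add_apply, Equiv.Perm.permMatrix,
      PEquiv.toMatrix_apply, Equiv.toPEquiv_apply, Option.mem_def, Option.some.injEq,
      smul_eq_mul, mul_ite, ite_mul, mul_zero, zero_mul, mul_one, one_mul,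
      Finset.sum_add_distrib, Finset.sum_ite_eq, Finset.sum_ite_eq', Finset.mem_univ,
      if_true, add_mul, mul_add]
    ring
  have h2 : ∀ v, (D *ᵥ x) (Sum.inr v)
      = x (.inr v) - ρ/2 * (x (.inl (σ₁⁻¹ v)) + x (.inl (σ₂⁻¹ v))) := by
    intro v
    have key : ∀ (σ : Equiv.Perm (Fin n)) (u : Fin n), (σ u = v) ↔ (u = σ⁻¹ v) :=
      fun σ u => Equiv.apply_eq_iff_eq_symm_apply σ
    simp only [hD, Matrix.mulVec, dotProduct, Fintype.sum_sum_type,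
      Matrix.fromBlocks_apply₂₁, Matrix.fromBlocks_apply₂₂, Matrix.one_apply,
      Matrix.transpose_apply, Matrix.smul_apply, Matrix.add_apply, Equiv.Perm.permMatrix,
      PEquiv.toMatrix_apply, Equiv.toPEquiv_apply, Option.mem_def, Option.some.injEq,
      key, smul_eq_mul, mul_ite, ite_mul, mul_zero, zero_mul, mul_one, one_mul,
      Finset.sum_add_distrib, Finset.sum_ite_eq, Finset.sum_ite_eq', Finset.mem_univ,
      if_true, add_mul, mul_add]
    ring
  have expand : x ⬝ᵥ D *ᵥ x
      = ∑ u, x (.inl u) * (x (.inl u) - ρ/2 * (x (.inr (σ₁ u)) + x (.inr (σ₂ u))))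
        + ∑ v, x (.inr v) * (x (.inr v) - ρ/2 * (x (.inl (σ₁⁻¹ v)) + x (.inl (σ₂⁻¹ v)))) := by
    simp only [dotProduct, Fintype.sum_sum_type]
    exact congrArg₂ (· + ·) (Finset.sum_congr rfl fun u _ => by rw [h1])
      (Finset.sum_congr rfl fun v _ => by rw [h2])
  rw [expand]
  have r1 : ∑ v, x (.inr v) * x (.inl (σ₁⁻¹ v)) = ∑ u, x (.inl u) * x (.inr (σ₁ u)) := by
    rw [← Equiv.sum_comp σ₁ (fun v => x (.inr v) * x (.inl (σ₁⁻¹ v)))]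
    simp [mul_comm]
  have r2 : ∑ v, x (.inr v) * x (.inl (σ₂⁻¹ v)) = ∑ u, x (.inl u) * x (.inr (σ₂ u)) := by
    rw [← Equiv.sum_comp σ₂ (fun v => x (.inr v) * x (.inl (σ₂⁻¹ v)))]
    simp [mul_comm]
  simp only [mul_sub, mul_add, Finset.sum_sub_distrib, Finset.sum_add_distrib, ← sq,
    show ∀ (p q : ℝ), p * (ρ/2 * q) = ρ/2 * (p * q) from fun p q => by ring,
    ← Finset.mul_sum]
  rw [r1, r2]
  ring

lemma posdef_smul {ι : Type*} [Fintype ι] {D : Matrix ι ι ℝ} (hD : D.PosDef)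
    {c : ℝ} (hc : 0 < c) : (c • D).PosDef := by
  refine Matrix.PosDef.of_dotProduct_mulVec_pos ?_ fun x hx => ?_
  · rw [Matrix.IsHermitian, Matrix.conjTranspose_smul, hD.1.eq, star_trivial]
  · rw [Matrix.smul_mulVec, dotProduct_smul, smul_eq_mul]
    exact mul_pos hc (hD.dotProduct_mulVec_pos hx)

lemma blocks_posDef (n : ℕ) {ρ : ℝ} (hρ : |ρ| < 1) (σ₁ σ₂ : Equiv.Perm (Fin n)) :
    (Matrix.fromBlocks 1
        (-(ρ/2) • (σ₁.permMatrix ℝ + σ₂.permMatrix ℝ))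
        (-(ρ/2) • (σ₁.permMatrix ℝ + σ₂.permMatrix ℝ))ᵀ
        (1 : Matrix (Fin n) (Fin n) ℝ)).PosDef := by
  refine Matrix.PosDef.of_dotProduct_mulVec_pos ?_ fun x hx => ?_
  · rw [Matrix.IsHermitian, Matrix.conjTranspose_eq_transpose_of_trivial,
      Matrix.fromBlocks_transpose, Matrix.transpose_one, Matrix.transpose_transpose]
  · rw [star_trivial, quad_eval n ρ σ₁ σ₂ x]
    set S1 := ∑ u, (x (.inl u))^2 with hS1
    set S2 := ∑ v, (x (.inr v))^2 with hS2
    set T1 := ∑ u, x (.inl u) * x (.inr (σ₁ u)) with hT1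
    set T2 := ∑ u, x (.inl u) * x (.inr (σ₂ u)) with hT2
    have habs : ∀ p q : ℝ, |p * q| ≤ (p^2 + q^2)/2 := by
      intro p q
      rw [abs_mul]
      nlinarith [sq_nonneg (|p| - |q|), sq_abs p, sq_abs q, abs_nonneg p, abs_nonneg q]
    have hTbound : ∀ σ : Equiv.Perm (Fin n),
        |∑ u, x (.inl u) * x (.inr (σ u))| ≤ (S1 + S2)/2 := by
      intro σ
      calc |∑ u, x (.inl u) * x (.inr (σ u))|
          ≤ ∑ u, |x (.inl u) * x (.inr (σ u))| := Finset.abs_sum_le_sum_abs _ _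
        _ ≤ ∑ u, ((x (.inl u))^2 + (x (.inr (σ u)))^2)/2 :=
            Finset.sum_le_sum fun u _ => habs _ _
        _ = (S1 + ∑ u, (x (.inr (σ u)))^2)/2 := by
            rw [← Finset.sum_div, Finset.sum_add_distrib, hS1]
        _ = (S1 + S2)/2 := by rw [Equiv.sum_comp σ (fun v => (x (.inr v))^2)]
    have h1 := hTbound σ₁
    have h2 := hTbound σ₂
    have hsplit : ∑ u, x (.inl u) * (x (.inr (σ₁ u)) + x (.inr (σ₂ u))) = T1 + T2 := by
      simp [mul_add, Finset.sum_add_distrib, hT1, hT2]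
    rw [hsplit]
    have hS : 0 < S1 + S2 := by
      have hx' : ∃ i, x i ≠ 0 := Function.ne_iff.mp hx
      obtain ⟨i, hi⟩ := hx'
      have : S1 + S2 = ∑ i : Fin n ⊕ Fin n, (x i)^2 := by
        rw [Fintype.sum_sum_type]
      rw [this]
      exact Finset.sum_pos' (fun j _ => sq_nonneg _)
        ⟨i, Finset.mem_univ i, by positivity⟩
    nlinarith [le_abs_self (ρ * (T1 + T2)), abs_mul ρ (T1 + T2), abs_add_le T1 T2,
      abs_nonneg ρ, mul_le_mul_of_nonneg_left (abs_add_le T1 T2) (abs_nonneg ρ)]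

/-- The joint Gaussian density of the pair of databases (d = 1, unit variances,
correlation `ρ`) when the true matching is `m`. -/
noncomputable def matchingDensity (n : ℕ) (ρ : ℝ) (m : Equiv.Perm (Fin n))
    (ab : (Fin n → ℝ) × (Fin n → ℝ)) : ℝ :=
  (2 * Real.pi * Real.sqrt (1 - ρ^2)) ^ (-(n : ℤ)) *
    Real.exp (-((∑ u, (ab.1 u)^2 + ∑ v, (ab.2 v)^2
      - 2 * ρ * ∑ u, ab.1 u * ab.2 (m u)) / (2 * (1 - ρ^2))))

/-- The Bhattacharyya coefficient `R(σ₁,σ₂)` between two matchings equals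
`√((1 − ρ²)^n / det D)` for the block matrix `D`. -/
theorem bhattacharyya_eq_det (n : ℕ) (ρ : ℝ) (hρ₁ : -1 < ρ) (hρ₂ : ρ < 1)
    (σ₁ σ₂ : Equiv.Perm (Fin n)) :
    ∫ ab : (Fin n → ℝ) × (Fin n → ℝ),
        Real.sqrt (matchingDensity n ρ σ₁ ab * matchingDensity n ρ σ₂ ab)
      = Real.sqrt ((1 - ρ^2) ^ n /
          Matrix.det (Matrix.fromBlocks 1
            (-(ρ/2) • (σ₁.permMatrix ℝ + σ₂.permMatrix ℝ))
            (-(ρ/2) • (σ₁.permMatrix ℝ + σ₂.permMatrix ℝ))ᵀ 1)) := by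
  have hρabs : |ρ| < 1 := abs_lt.mpr ⟨hρ₁, hρ₂⟩
  have hs : (0:ℝ) < 1 - ρ^2 := by nlinarith
  set s : ℝ := 1 - ρ^2 with hs_def
  clear_value s
  set D := Matrix.fromBlocks 1
            (-(ρ/2) • (σ₁.permMatrix ℝ + σ₂.permMatrix ℝ))
            (-(ρ/2) • (σ₁.permMatrix ℝ + σ₂.permMatrix ℝ))ᵀ
            (1 : Matrix (Fin n) (Fin n) ℝ) with hDdef
  have hDpos : D.PosDef := blocks_posDef n hρabs σ₁ σ₂
  have hdetD : 0 < D.det := hDpos.det_pos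
  set M := (2*s)⁻¹ • D with hMdef
  have hMpos : M.PosDef := posdef_smul hDpos (by positivity)
  have hdetM : 0 < M.det := hMpos.det_pos
  set c : ℝ := (2 * π * Real.sqrt s) ^ (-(n : ℤ)) with hc_def
  have hc : 0 < c := by
    apply zpow_pos
    have := Real.sqrt_pos.mpr hs
    positivity
  -- pointwise identity
  have hpoint : ∀ x : Fin n ⊕ Fin n → ℝ,
      Real.sqrt (matchingDensity n ρ σ₁ (MeasurableEquiv.sumPiEquivProdPi (fun _ => ℝ) x)
        * matchingDensity n ρ σ₂ (MeasurableEquiv.sumPiEquivProdPi (fun _ => ℝ) x))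
      = c * Real.exp (-(x ⬝ᵥ M *ᵥ x)) := by
    intro x
    have hxe : (MeasurableEquiv.sumPiEquivProdPi (fun _ : Fin n ⊕ Fin n => ℝ) x)
        = (fun u => x (.inl u), fun v => x (.inr v)) := rfl
    rw [hxe]
    unfold matchingDensity
    simp only [← hs_def]
    set E1 : ℝ := -((∑ u, (x (.inl u))^2 + ∑ v, (x (.inr v))^2
      - 2 * ρ * ∑ u, x (.inl u) * x (.inr (σ₁ u))) / (2 * s)) with hE1
    set E2 : ℝ := -((∑ u, (x (.inl u))^2 + ∑ v, (x (.inr v))^2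
      - 2 * ρ * ∑ u, x (.inl u) * x (.inr (σ₂ u))) / (2 * s)) with hE2
    have : c * Real.exp E1 * (c * Real.exp E2) = (c * c) * Real.exp (E1 + E2) := by
      rw [Real.exp_add]; ring
    rw [this, Real.sqrt_mul (by positivity), Real.sqrt_mul_self hc.le, ← Real.exp_half]
    congr 1
    have hquad : x ⬝ᵥ M *ᵥ x = (2*s)⁻¹ * (x ⬝ᵥ D *ᵥ x) := by
      rw [hMdef, Matrix.smul_mulVec, dotProduct_smul, smul_eq_mul]
    rw [hquad, quad_eval n ρ σ₁ σ₂ x, hE1, hE2]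
    have hmul : ∑ u, x (.inl u) * (x (.inr (σ₁ u)) + x (.inr (σ₂ u)))
        = ∑ u, x (.inl u) * x (.inr (σ₁ u)) + ∑ u, x (.inl u) * x (.inr (σ₂ u)) := by
      simp [mul_add, Finset.sum_add_distrib]
    rw [hmul]
    field_simp
    ring
  -- transfer the integral
  have hMP : MeasurePreserving
      (MeasurableEquiv.sumPiEquivProdPi (fun _ : Fin n ⊕ Fin n => ℝ)) volume volume :=
    volume_measurePreserving_sumPiEquivProdPi _
  rw [← hMP.integral_comp' (fun ab => Real.sqrt (matchingDensity n ρ σ₁ ab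
      * matchingDensity n ρ σ₂ ab))]
  calc ∫ x : Fin n ⊕ Fin n → ℝ,
        Real.sqrt (matchingDensity n ρ σ₁ (MeasurableEquiv.sumPiEquivProdPi (fun _ => ℝ) x)
          * matchingDensity n ρ σ₂ (MeasurableEquiv.sumPiEquivProdPi (fun _ => ℝ) x))
      = ∫ x : Fin n ⊕ Fin n → ℝ, c * Real.exp (-(x ⬝ᵥ M *ᵥ x)) := by
        exact integral_congr_ae (Filter.Eventually.of_forall hpoint)
    _ = c * Real.sqrt (π ^ (Fintype.card (Fin n ⊕ Fin n)) / M.det) := by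
        simp_rw [← smul_eq_mul, integral_smul]
        rw [integral_exp_neg_quadForm hMpos]
    _ = Real.sqrt (s ^ n / D.det) := by
        have hcard : Fintype.card (Fin n ⊕ Fin n) = n + n := by
          simp [Fintype.card_sum]
        have hdetMval : M.det = ((2*s)⁻¹) ^ (n + n) * D.det := by
          rw [hMdef, Matrix.det_smul, hcard]
        have hcpow : c = ((2 * π * Real.sqrt s) ^ n)⁻¹ := by
          rw [hc_def, _root_.zpow_neg, zpow_natCast]
        have key : (c * Real.sqrt (π ^ (Fintype.card (Fin n ⊕ Fin n)) / M.det))^2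
            = s ^ n / D.det := by
          rw [mul_pow, Real.sq_sqrt (by positivity), hcard, hdetMval, hcpow]
          have hss : (2 * π * Real.sqrt s)^2 = 4 * π^2 * s := by
            rw [mul_pow, Real.sq_sqrt hs.le]
            ring
          have h1 : (((2 * π * Real.sqrt s) ^ n)⁻¹)^2 = ((4 * π^2 * s) ^ n)⁻¹ := by
            rw [inv_pow, ← pow_mul, mul_comm n 2, pow_mul, hss]
          have h2 : (π:ℝ) ^ (n + n) = (π^2) ^ n := by
            rw [show n + n = 2 * n from (two_mul n).symm, pow_mul]
          have h3 : ((2*s)⁻¹ : ℝ) ^ (n + n) = ((4 * s^2) ^ n)⁻¹ := by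
            have h2s : ((2*s : ℝ)⁻¹)^2 = (4 * s^2)⁻¹ := by
              rw [inv_pow]
              congr 1
              ring
            rw [show n + n = 2 * n from (two_mul n).symm, pow_mul, h2s, inv_pow]
          rw [h1, h2, h3]
          have h4 : (0:ℝ) < (4 * π^2 * s) ^ n := by positivity
          have h5 : (0:ℝ) < (4 * s^2 : ℝ) ^ n := by positivity
          field_simp
          ring
        have hnn : 0 ≤ c * Real.sqrt (π ^ (Fintype.card (Fin n ⊕ Fin n)) / M.det) := by
          positivity
        rw [← Real.sqrt_sq hnn, key]
end

section
/- Let n ∈ ℕ, s t : ℝ with s > |t|, and π : Equiv.Perm (Fin n) with f := the number of fixed points of π. Then Matrix.det (s • (1 : Matrix (Fin n) (Fin n) ℝ) − (t/2) • (P_π + P_πᵀ)) ≥ (s − t)^f * ((s − t) * (s + t)) ^ ((n − f) / 2 : ℝ). In particular, with s = 1 − ρ²/2 and t = ρ²/2 this determinant is at least (1 − ρ²)^{(n + f)/2}, so the Bhattacharyya coefficient between two matchings agreeing on f users is at most (1 − ρ²)^{(n − f)/4}. -/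
open Matrix Equiv Finset

variable {α : Type*} [Fintype α] [DecidableEq α]

lemma permM_entry (a b : ℝ) (σ : Equiv.Perm α) (i j : α) :
    (a • (1 : Matrix α α ℝ) - b • σ.permMatrix ℝ) i j
      = (if i = j then a else 0) - (if σ i = j then b else 0) := by
  simp [Matrix.sub_apply, Matrix.smul_apply, Matrix.one_apply, PEquiv.toMatrix_apply,
    Equiv.toPEquiv_apply, mul_ite, mul_one, mul_zero]

lemma det_block (a b : ℝ) (σ : Equiv.Perm α) (p : α → Prop) [DecidablePred p]
    (hp : ∀ x, p x ↔ p (σ x)) :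
    (a • (1 : Matrix α α ℝ) - b • σ.permMatrix ℝ).det
      = (a • (1 : Matrix {x // p x} {x // p x} ℝ) - b • (σ.subtypePerm (fun x => (hp x).symm)).permMatrix ℝ).det
        * (a • (1 : Matrix {x // ¬ p x} {x // ¬ p x} ℝ)
            - b • (σ.subtypePerm (fun x => not_congr (hp x).symm)).permMatrix ℝ).det := by
  rw [← Matrix.det_submatrix_equiv_self (Equiv.sumCompl p)]
  have hM : (a • (1 : Matrix α α ℝ) - b • σ.permMatrix ℝ).submatrix
        (Equiv.sumCompl p) (Equiv.sumCompl p)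
      = Matrix.fromBlocks
          (a • (1 : Matrix {x // p x} {x // p x} ℝ) - b • (σ.subtypePerm (fun x => (hp x).symm)).permMatrix ℝ)
          0 0
          (a • (1 : Matrix {x // ¬ p x} {x // ¬ p x} ℝ)
            - b • (σ.subtypePerm (fun x => not_congr (hp x).symm)).permMatrix ℝ) := by
    ext i j
    have SIMP := 0
    rcases i with i | i <;> rcases j with j | j
    · simp [Matrix.submatrix_apply, permM_entry, Equiv.toPEquiv_apply, Matrix.one_apply, Equiv.Perm.subtypePerm_apply, Subtype.ext_iff]
    · have h1 : (i : α) ≠ j := fun h => j.2 (h ▸ i.2)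
      have h2 : σ (i : α) ≠ j := fun h => j.2 (h ▸ ((hp i).mp i.2))
      simp [Matrix.submatrix_apply, permM_entry, Equiv.toPEquiv_apply, Matrix.one_apply, h1, h2]
    · have h1 : (i : α) ≠ j := fun h => i.2 (h ▸ j.2)
      have h2 : σ (i : α) ≠ j := fun h => i.2 ((hp i).mpr (h ▸ j.2))
      simp [Matrix.submatrix_apply, permM_entry, Equiv.toPEquiv_apply, Matrix.one_apply, h1, h2]
    · simp [Matrix.submatrix_apply, permM_entry, Equiv.toPEquiv_apply, Matrix.one_apply, Equiv.Perm.subtypePerm_apply, Subtype.ext_iff]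
  rw [hM, Matrix.det_fromBlocks_zero₂₁]

lemma det_cycle_full (a b : ℝ) (σ : Equiv.Perm α) (hσ : σ.IsCycle)
    (hall : ∀ x, σ x ≠ x) :
    (a • (1 : Matrix α α ℝ) - b • σ.permMatrix ℝ).det
      = a ^ Fintype.card α - b ^ Fintype.card α := by
  set M := a • (1 : Matrix α α ℝ) - b • σ.permMatrix ℝ with hMdef
  have hentry : ∀ i j, M i j = (if i = j then a else 0) - (if σ i = j then b else 0) :=
    permM_entry a b σ
  have hsupp : σ.support = Finset.univ := by
    apply Finset.eq_univ_iff_forall.mpr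
    intro x; exact Equiv.Perm.mem_support.mpr (hall x)
  -- key: terms vanish unless τ = 1 or τ = σ⁻¹
  have key : ∀ τ : Equiv.Perm α, τ ≠ 1 → τ ≠ σ⁻¹ → (∏ i, M (τ i) i) = 0 := by
    intro τ hτ1 hτσ
    by_contra h
    have hne : ∀ i, M (τ i) i ≠ 0 := fun i hi =>
      h (Finset.prod_eq_zero (Finset.mem_univ i) hi)
    have hor : ∀ i, τ i = i ∨ τ i = σ⁻¹ i := by
      intro i
      by_contra hcon
      push_neg at hcon
      apply hne i
      rw [hentry]
      have e1 : τ i ≠ i := hcon.1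
      have e2 : σ (τ i) ≠ i := by
        intro h'
        exact hcon.2 ((Equiv.Perm.eq_inv_iff_eq).mpr h')
      simp [e1, e2]
    -- closure of the moved set under σ⁻¹
    have hclos : ∀ i, τ i ≠ i → τ (σ⁻¹ i) ≠ σ⁻¹ i := by
      intro i hi hfix
      have : τ i = σ⁻¹ i := (hor i).resolve_left hi
      exact hi (τ.injective (by rw [this, hfix])) |>.elim
    -- get a moved point
    obtain ⟨x, hx⟩ : ∃ x, τ x ≠ x := by
      by_contra hc
      push_neg at hc
      exact hτ1 (Equiv.ext hc)
    -- every point is moved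
    have hmoved : ∀ y, τ y ≠ y := by
      intro y
      have hsc : σ.SameCycle x y := hσ.sameCycle (hall x) (hall y)
      have hsc' : (σ⁻¹).SameCycle x y := Equiv.Perm.sameCycle_inv.mpr hsc
      obtain ⟨m, -, -, hm⟩ := hsc'.exists_pow_eq σ⁻¹
      subst hm
      clear hsc hsc'
      induction m with
      | zero => simpa using hx
      | succ k ih =>
        have : (σ⁻¹ ^ (k+1)) x = σ⁻¹ ((σ⁻¹ ^ k) x) := by
          rw [pow_succ']; rfl
        rw [this]
        exact hclos _ ih
    have : τ = σ⁻¹ := by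
      apply Equiv.ext
      intro i
      exact (hor i).resolve_left (hmoved i)
    exact hτσ this
  have h1ne : (1 : Equiv.Perm α) ≠ σ⁻¹ := by
    intro h
    obtain ⟨x, hx, -⟩ := hσ
    exact hx (by rw [← inv_inv σ, ← h]; simp)
  rw [Matrix.det_apply]
  rw [← Finset.sum_subset (Finset.subset_univ ({1, σ⁻¹} : Finset (Equiv.Perm α)))
    (fun τ _ hτ => by
      have h1 : τ ≠ 1 := fun h => hτ (by simp [h])
      have h2 : τ ≠ σ⁻¹ := fun h => hτ (by simp [h])
      rw [key τ h1 h2, smul_zero])]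
  rw [Finset.sum_pair h1ne]
  have t1 : (Equiv.Perm.sign (1 : Equiv.Perm α)) • (∏ i, M ((1 : Equiv.Perm α) i) i)
      = a ^ Fintype.card α := by
    have : ∀ i, M ((1 : Equiv.Perm α) i) i = a := by
      intro i
      rw [show ((1 : Equiv.Perm α) i) = i from rfl, hentry]
      simp [hall i]
    rw [Finset.prod_congr rfl (fun i _ => this i)]
    simp [Finset.prod_const, Finset.card_univ]
  have t2 : (Equiv.Perm.sign (σ⁻¹ : Equiv.Perm α)) • (∏ i, M (σ⁻¹ i) i)
      = -(b ^ Fintype.card α) := by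
    have hval : ∀ i, M (σ⁻¹ i) i = -b := by
      intro i
      rw [hentry]
      have e1 : σ⁻¹ i ≠ i := fun h => hall i (by nth_rewrite 1 [← h]; exact σ.apply_symm_apply i)
      have e1' : σ⁻¹ i ≠ i := e1
      have e2 : σ (σ⁻¹ i) = i := by simp
      rw [if_neg e1, if_pos e2]; ring
    rw [Finset.prod_congr rfl (fun i _ => hval i)]
    rw [Finset.prod_const, Finset.card_univ]
    have hsign : Equiv.Perm.sign σ⁻¹ = -(-1) ^ Fintype.card α := by
      rw [Equiv.Perm.sign_inv, hσ.sign, hsupp, Finset.card_univ]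
    rw [hsign]
    have : ((-(-1) ^ Fintype.card α : ℤˣ) : ℝ) • ((-b) ^ Fintype.card α)
        = -(b ^ Fintype.card α) := by
      rw [smul_eq_mul, neg_pow b]
      push_cast
      ring_nf
      rw [mul_comm (Fintype.card α) 2, pow_mul]
      norm_num
    rw [← this]
    norm_num [Units.smul_def]
  rw [t1, t2]
  ring

lemma det_one_perm (a b : ℝ) : (a • (1 : Matrix α α ℝ)
    - b • Equiv.Perm.permMatrix ℝ (1 : Equiv.Perm α)).det = (a - b) ^ Fintype.card α := by
  have : a • (1 : Matrix α α ℝ) - b • Equiv.Perm.permMatrix ℝ (1 : Equiv.Perm α)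
      = (a - b) • (1 : Matrix α α ℝ) := by
    ext i j
    rw [permM_entry]
    simp only [Equiv.Perm.coe_one, id_eq, Matrix.smul_apply, Matrix.one_apply]
    split_ifs <;> simp_all
  rw [this, Matrix.det_smul, Matrix.det_one, mul_one]

lemma isCycle_subtype (σ : Equiv.Perm α) (hσ : σ.IsCycle)
    (hp : ∀ x, (σ x ≠ x) ↔ (σ (σ x) ≠ σ x)) :
    (σ.subtypePerm (p := fun x => σ x ≠ x) (fun x => (hp x).symm)).IsCycle := by
  obtain ⟨x, hx, hrest⟩ := hσ
  refine ⟨⟨x, hx⟩, ?_, ?_⟩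
  · intro h
    exact hx (congrArg Subtype.val h)
  · rintro ⟨y, hy⟩ hymoved
    have hsc : σ.SameCycle x y := hrest hy
    obtain ⟨m, -, -, hm⟩ := hsc.exists_pow_eq σ
    refine ⟨(m : ℤ), ?_⟩
    rw [zpow_natCast, Equiv.Perm.subtypePerm_pow]
    exact Subtype.ext (by simpa using hm)

lemma card_subtype_moved (σ : Equiv.Perm α) :
    Fintype.card {x // σ x ≠ x} = σ.support.card := by
  rw [Fintype.card_subtype]
  congr 1

lemma det_perm_formula (a b : ℝ) (hab : a ≠ b) (σ : Equiv.Perm α) :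
    (a • (1 : Matrix α α ℝ) - b • σ.permMatrix ℝ).det
      = (a - b) ^ (Fintype.card α - σ.support.card)
        * (σ.cycleType.map fun k => a ^ k - b ^ k).prod := by
  have habne : (a - b) ≠ 0 := sub_ne_zero.mpr hab
  induction σ using Equiv.Perm.cycle_induction_on with
  | base_one =>
    rw [det_one_perm a b]; simp [Equiv.Perm.cycleType_one]
  | base_cycles σ hσ =>
    have hp : ∀ x, (σ x ≠ x) ↔ (σ (σ x) ≠ σ x) := by
      intro x
      simp only [← Equiv.Perm.mem_support]
      exact (Equiv.Perm.apply_mem_support).symm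
    rw [det_block a b σ (fun x => σ x ≠ x) hp]
    have h2 : σ.subtypePerm (p := fun x => ¬ σ x ≠ x) (fun x => not_congr (hp x).symm) = 1 := by
      apply Equiv.ext
      rintro ⟨y, hy⟩
      exact Subtype.ext (not_not.mp hy)
    rw [h2, det_one_perm a b,
      det_cycle_full a b _ (isCycle_subtype σ hσ hp)
        (fun x h => x.2 (congrArg Subtype.val h))]
    rw [card_subtype_moved, Fintype.card_subtype_compl, card_subtype_moved, hσ.cycleType]
    simp [mul_comm]
  | induction_disjoint σ τ hd hσc ihσ ihτ =>
    have hdmem : ∀ x, σ x ≠ x → τ x = x := by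
      intro x hx
      rcases (Equiv.Perm.disjoint_iff_eq_or_eq.mp hd) x with h | h
      · exact absurd h hx
      · exact h
    have hmem_tau : ∀ x, σ (τ x) ≠ τ x → τ x = x := by
      intro x hx
      exact τ.injective (hdmem (τ x) hx)
    have hpστ : ∀ x, (σ x ≠ x) ↔ (σ ((σ * τ) x) ≠ (σ * τ) x) := by
      intro x
      simp only [Equiv.Perm.mul_apply]
      constructor
      · intro hx
        rw [hdmem x hx]
        intro h
        exact hx (σ.injective (by rw [h]))
      · intro hx hfix
        apply hx
        have hστx : σ (τ x) = τ x := by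
          rcases (Equiv.Perm.disjoint_iff_eq_or_eq.mp hd) (τ x) with h | h
          · exact h
          · have h' : τ x = x := τ.injective h
            rw [h']
            exact hfix
        rw [hστx]
        exact hστx
    have hpσ : ∀ x, (σ x ≠ x) ↔ (σ (σ x) ≠ σ x) := by
      intro x
      simp only [← Equiv.Perm.mem_support]
      exact (Equiv.Perm.apply_mem_support).symm
    have hpτ : ∀ x, (σ x ≠ x) ↔ (σ (τ x) ≠ τ x) := by
      intro x
      constructor
      · intro hx; rwa [hdmem x hx]
      · intro hx
        have h1 : τ x = x := hmem_tau x hx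
        rwa [h1] at hx
    rw [det_block a b (σ * τ) (fun x => σ x ≠ x) hpστ]
    have e1 : (σ * τ).subtypePerm (p := fun x => σ x ≠ x) (fun x => (hpστ x).symm) = σ.subtypePerm (p := fun x => σ x ≠ x) (fun x => (hpσ x).symm) := by
      apply Equiv.ext
      rintro ⟨y, hy⟩
      exact Subtype.ext (by simp [hdmem y hy])
    have e2 : (σ * τ).subtypePerm (p := fun x => ¬ σ x ≠ x) (fun x => not_congr (hpστ x).symm)
        = τ.subtypePerm (p := fun x => ¬ σ x ≠ x) (fun x => not_congr (hpτ x).symm) := by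
      apply Equiv.ext
      rintro ⟨y, hy⟩
      apply Subtype.ext
      simp only [Equiv.Perm.subtypePerm_apply, Equiv.Perm.mul_apply]
      have hyy : σ y = y := not_not.mp hy
      rcases (Equiv.Perm.disjoint_iff_eq_or_eq.mp hd) (τ y) with h | h
      · exact h
      · have h' : τ y = y := τ.injective h
        rw [h']
        exact hyy
    rw [e1, e2]
    have bσ := det_block a b σ (fun x => σ x ≠ x) hpσ
    have bτ := det_block a b τ (fun x => σ x ≠ x) hpτ
    have hσ1 : σ.subtypePerm (p := fun x => ¬ σ x ≠ x) (fun x => not_congr (hpσ x).symm) = 1 := by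
      apply Equiv.ext
      rintro ⟨y, hy⟩
      exact Subtype.ext (not_not.mp hy)
    have hτ1 : τ.subtypePerm (p := fun x => σ x ≠ x) (fun x => (hpτ x).symm) = 1 := by
      apply Equiv.ext
      rintro ⟨y, hy⟩
      exact Subtype.ext (hdmem y hy)
    rw [hσ1, det_one_perm a b] at bσ
    rw [hτ1, det_one_perm a b] at bτ
    rw [ihσ] at bσ
    rw [ihτ] at bτ
    have hcards : Fintype.card {x // σ x ≠ x} = σ.support.card := card_subtype_moved σ
    have hcardc : Fintype.card {x // ¬ σ x ≠ x} = Fintype.card α - σ.support.card := by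
      rw [Fintype.card_subtype_compl, card_subtype_moved]
    have hle : σ.support.card + τ.support.card ≤ Fintype.card α := by
      rw [← Equiv.Perm.Disjoint.card_support_mul hd]
      exact (Finset.card_le_card (Finset.subset_univ _)).trans_eq (Finset.card_univ)
    rw [hcardc] at bσ
    rw [hcards] at bτ
    have hD1 : (a • (1 : Matrix {x // σ x ≠ x} {x // σ x ≠ x} ℝ)
        - b • (σ.subtypePerm (p := fun x => σ x ≠ x) (fun x => (hpσ x).symm)).permMatrix ℝ).det
          = (σ.cycleType.map fun k => a ^ k - b ^ k).prod := by
      refine mul_right_cancel₀ (pow_ne_zero (Fintype.card α - σ.support.card) habne) ?_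
      rw [← bσ]
      ring
    have hD2 : (a • (1 : Matrix {x // ¬ σ x ≠ x} {x // ¬ σ x ≠ x} ℝ)
        - b • (τ.subtypePerm (p := fun x => ¬ σ x ≠ x) (fun x => not_congr (hpτ x).symm)).permMatrix ℝ).det
          = (a - b) ^ (Fintype.card α - σ.support.card - τ.support.card)
              * (τ.cycleType.map fun k => a ^ k - b ^ k).prod := by
      have hsplit : (a - b) ^ (Fintype.card α - τ.support.card)
          = (a - b) ^ σ.support.card
            * (a - b) ^ (Fintype.card α - σ.support.card - τ.support.card) := by
        rw [← pow_add]
        congr 1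
        omega
      rw [hsplit, mul_assoc] at bτ
      exact (mul_left_cancel₀ (pow_ne_zero _ habne) bτ).symm
    rw [hD1, hD2, Equiv.Perm.Disjoint.cycleType_mul hd, Equiv.Perm.Disjoint.card_support_mul hd,
      Multiset.map_add, Multiset.prod_add]
    have harith : Fintype.card α - (σ.support.card + τ.support.card)
        = Fintype.card α - σ.support.card - τ.support.card := by omega
    rw [harith]
    ring

lemma rpow_superadd {X Y p : ℝ} (hY : 0 ≤ Y) (hXY : Y ≤ X) (hp : 1 ≤ p) :
    (X - Y) ^ p + Y ^ p ≤ X ^ p := by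
  have h0 : (0:ℝ) ≤ X - Y := by linarith
  have hX : (0:ℝ) ≤ X := le_trans hY hXY
  have hp0 : 0 < p := lt_of_lt_of_le one_pos hp
  have key := NNReal.rpow_add_rpow_le_add (X - Y).toNNReal Y.toNNReal hp
  have key2 := NNReal.rpow_le_rpow key (le_of_lt hp0)
  rw [← NNReal.rpow_mul, one_div, inv_mul_cancel₀ (ne_of_gt hp0), NNReal.rpow_one] at key2
  have hsum : (X - Y).toNNReal + Y.toNNReal = X.toNNReal := by
    rw [← Real.toNNReal_add h0 hY, sub_add_cancel]
  rw [hsum] at key2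
  have := NNReal.coe_le_coe.mpr key2
  push_cast [NNReal.coe_rpow, Real.coe_toNNReal _ h0, Real.coe_toNNReal _ hY,
    Real.coe_toNNReal _ hX] at this
  exact this

lemma sq_pow_bound {a b : ℝ} (ha : 0 ≤ a) (hba : |b| ≤ a) {k : ℕ} (hk : 2 ≤ k) :
    (a ^ 2 - b ^ 2) ^ k ≤ (a ^ k - b ^ k) ^ 2 := by
  set v := |b| with hv
  have hv0 : 0 ≤ v := abs_nonneg b
  have hb2 : b ^ 2 = v ^ 2 := (sq_abs b).symm
  have hvk : b ^ k ≤ v ^ k := by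
    calc b ^ k ≤ |b ^ k| := le_abs_self _
    _ = v ^ k := by rw [abs_pow]
  have hc0 : 0 ≤ a ^ 2 - v ^ 2 := by
    have := pow_le_pow_left₀ hv0 hba 2
    linarith
  have hp1 : (1:ℝ) ≤ (k:ℝ)/2 := by
    have : (2:ℝ) ≤ (k:ℝ) := by exact_mod_cast hk
    linarith
  have key := rpow_superadd (X := a^2) (Y := v^2) (by positivity) (pow_le_pow_left₀ hv0 hba 2) hp1
  have hXp : ((a:ℝ)^2) ^ ((k:ℝ)/2) = a ^ k := by
    rw [← Real.rpow_natCast a 2, ← Real.rpow_mul ha, ← Real.rpow_natCast a k]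
    congr 1
    push_cast
    ring
  have hYp : ((v:ℝ)^2) ^ ((k:ℝ)/2) = v ^ k := by
    rw [← Real.rpow_natCast v 2, ← Real.rpow_mul hv0, ← Real.rpow_natCast v k]
    congr 1
    push_cast
    ring
  have hkey : (a^2 - v^2) ^ ((k:ℝ)/2) ≤ a ^ k - v ^ k := by
    rw [hXp, hYp] at key
    linarith
  have hsq : ((a^2 - v^2) ^ ((k:ℝ)/2)) ^ 2 = (a^2 - v^2) ^ k := by
    rw [← Real.rpow_natCast ((a^2 - v^2) ^ ((k:ℝ)/2)) 2, ← Real.rpow_mul hc0,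
      ← Real.rpow_natCast (a^2 - v^2) k]
    congr 1
    push_cast
    ring
  have hvk0 : 0 ≤ a ^ k - v ^ k := by
    have := pow_le_pow_left₀ hv0 hba k
    linarith
  calc (a ^ 2 - b ^ 2) ^ k = (a ^ 2 - v ^ 2) ^ k := by rw [hb2]
  _ = ((a^2 - v^2) ^ ((k:ℝ)/2)) ^ 2 := hsq.symm
  _ ≤ (a ^ k - v ^ k) ^ 2 := pow_le_pow_left₀ (Real.rpow_nonneg hc0 _) hkey 2
  _ ≤ (a ^ k - b ^ k) ^ 2 := by
      apply pow_le_pow_left₀ hvk0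
      linarith

lemma multiset_prod_le {m : Multiset ℕ} {f g : ℕ → ℝ}
    (h : ∀ k ∈ m, 0 ≤ f k ∧ f k ≤ g k) : (m.map f).prod ≤ (m.map g).prod := by
  induction m using Multiset.induction_on with
  | empty => simp
  | cons k m ih =>
    simp only [Multiset.map_cons, Multiset.prod_cons]
    have hk := h k (Multiset.mem_cons_self _ _)
    have hrest := fun j hj => h j (Multiset.mem_cons_of_mem hj)
    have hprod0 : 0 ≤ (m.map f).prod := by
      apply Multiset.prod_nonneg
      intro x hx
      obtain ⟨j, hj, rfl⟩ := Multiset.mem_map.mp hx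
      exact (hrest j hj).1
    exact mul_le_mul hk.2 (ih hrest) hprod0 (le_trans hk.1 hk.2)

lemma multiset_prod_pow (c : ℝ) (m : Multiset ℕ) :
    (m.map fun k => c ^ k).prod = c ^ m.sum := by
  induction m using Multiset.induction_on with
  | empty => simp
  | cons k m ih => simp [Multiset.map_cons, Multiset.prod_cons, ih, pow_add]

/-- Lower bound on `det(s I − (t/2)(P_π + P_πᵀ))` in terms of the number `f` of
fixed points of `π`: it is at least `(s − t)^f ((s − t)(s + t))^{(n − f)/2}`. -/
theorem det_perm_laplacian_ge (n : ℕ) (s t : ℝ) (hst : s > |t|) (π : Equiv.Perm (Fin n)) :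
    Matrix.det (s • (1 : Matrix (Fin n) (Fin n) ℝ)
        - (t/2) • (π.permMatrix ℝ + (π.permMatrix ℝ)ᵀ))
      ≥ (s - t) ^ (Finset.univ.filter fun u => π u = u).card
        * ((s - t) * (s + t))
            ^ (((n : ℝ) - (Finset.univ.filter fun u => π u = u).card) / 2) := by
  have habs := abs_lt.mp hst
  have ht1 : 0 < s + t := by linarith
  have ht2 : 0 < s - t := by linarith
  set x := Real.sqrt (s + t) with hxdef
  set y := Real.sqrt (s - t) with hydef
  have hx : 0 < x := Real.sqrt_pos.mpr ht1
  have hy : 0 < y := Real.sqrt_pos.mpr ht2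
  have hx2 : x ^ 2 = s + t := Real.sq_sqrt ht1.le
  have hy2 : y ^ 2 = s - t := Real.sq_sqrt ht2.le
  set a := (x + y) / 2 with hadef
  set b := (x - y) / 2 with hbdef
  have hs : a ^ 2 + b ^ 2 = s := by
    rw [hadef, hbdef]
    linear_combination hx2 / 2 + hy2 / 2
  have habt : a * b = t / 2 := by
    rw [hadef, hbdef]
    linear_combination hx2 / 4 - hy2 / 4
  have haminus : a - b = y := by rw [hadef, hbdef]; ring
  have haplus : a + b = x := by rw [hadef, hbdef]; ring
  have ha0 : 0 ≤ a := by rw [hadef]; positivity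
  have hba : |b| ≤ a := by
    rw [abs_le]
    constructor <;> [skip; skip] <;> rw [hadef, hbdef] <;> linarith
  have hab : a ≠ b := by
    have : b < a := by linarith [sub_pos.mpr hy, haminus]
    exact this.ne'
  set P := π.permMatrix ℝ with hPdef
  have hP : ∀ i j, P i j = if π i = j then 1 else 0 := by
    intro i j
    simp [hPdef, PEquiv.toMatrix_apply, Equiv.toPEquiv_apply]
  have hPPt : P * Pᵀ = 1 := by
    ext i j
    rw [Matrix.mul_apply, Finset.sum_eq_single (π i)]
    · rw [Matrix.transpose_apply, hP, hP, if_pos rfl, one_mul, Matrix.one_apply]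
      by_cases h : i = j
      · subst h; simp
      · rw [if_neg (fun hh : π j = π i => h (π.injective hh).symm), if_neg h]
    · intro k _ hk
      rw [hP, if_neg (fun hh => hk hh.symm), zero_mul]
    · intro hmem
      exact absurd (Finset.mem_univ _) hmem
  have hfact : s • (1 : Matrix (Fin n) (Fin n) ℝ) - (t/2) • (P + Pᵀ)
      = (a • 1 - b • P) * (a • 1 - b • Pᵀ) := by
    have expand : (a • (1 : Matrix (Fin n) (Fin n) ℝ) - b • P) * (a • 1 - b • Pᵀ)
        = (a*a) • (1 : Matrix (Fin n) (Fin n) ℝ) - (a*b) • Pᵀ - (b*a) • P + (b*b) • (P * Pᵀ) := by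
      simp only [Matrix.sub_mul, Matrix.mul_sub, smul_mul_assoc, mul_smul_comm,
        Matrix.one_mul, Matrix.mul_one, smul_smul]
      module
    rw [expand, hPPt, ← hs, ← habt]
    module
  have hTr : (a • (1 : Matrix (Fin n) (Fin n) ℝ) - b • Pᵀ) = (a • 1 - b • P)ᵀ := by
    rw [Matrix.transpose_sub, Matrix.transpose_smul, Matrix.transpose_smul,
      Matrix.transpose_one]
  have hdet : (s • (1 : Matrix (Fin n) (Fin n) ℝ) - (t/2) • (P + Pᵀ)).det
      = ((a • (1 : Matrix (Fin n) (Fin n) ℝ) - b • P).det) ^ 2 := by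
    rw [hfact, Matrix.det_mul, hTr, Matrix.det_transpose, sq]
  rw [ge_iff_le, hdet, det_perm_formula a b hab π, Fintype.card_fin]
  set f := (Finset.univ.filter fun u => π u = u).card with hfdef
  set m := π.support.card with hmdef
  have hfm : f + m = n := by
    rw [hfdef, hmdef]
    have h1 : (Finset.univ.filter fun u => ¬ π u = u) = π.support := by
      ext u
      simp [Equiv.Perm.mem_support]
    rw [← h1, Finset.card_filter_add_card_filter_not]
    simp
  set c := a^2 - b^2 with hcdef
  have hcxy : c = x * y := by rw [hcdef, hadef, hbdef]; ring
  have hc0 : 0 ≤ c := by rw [hcxy]; positivity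
  have hc2 : c ^ 2 = (s - t) * (s + t) := by
    rw [hcxy, mul_pow, hx2, hy2]; ring
  have hbound : (π.cycleType.map fun k => c ^ k).prod
      ≤ ((π.cycleType.map fun k => a ^ k - b ^ k).prod) ^ 2 := by
    rw [← Multiset.prod_map_pow]
    apply multiset_prod_le
    intro k hk
    refine ⟨by positivity, ?_⟩
    rw [hcdef]
    exact sq_pow_bound ha0 hba (Equiv.Perm.two_le_of_mem_cycleType hk)
  have hsum : (π.cycleType.map fun k => c ^ k).prod = c ^ m := by
    rw [multiset_prod_pow, Equiv.Perm.sum_cycleType]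
  have hnf : ((n:ℝ) - (f:ℝ)) / 2 = (m:ℝ)/2 := by
    have : (f:ℝ) + (m:ℝ) = (n:ℝ) := by exact_mod_cast hfm
    linarith
  have hrhs : ((s - t) * (s + t)) ^ (((n:ℝ) - (f:ℝ))/2) = c ^ m := by
    rw [hnf, ← hc2, ← Real.rpow_natCast c 2, ← Real.rpow_mul hc0, ← Real.rpow_natCast c m]
    congr 1
    push_cast
    ring
  rw [hrhs]
  have hnm : n - m = f := by omega
  have hlhs : ((a - b) ^ (n - m) * (π.cycleType.map fun k => a ^ k - b ^ k).prod) ^ 2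
      = (s - t) ^ f * ((π.cycleType.map fun k => a ^ k - b ^ k).prod) ^ 2 := by
    rw [hnm, mul_pow, ← pow_mul, mul_comm f 2, pow_mul, haminus, hy2]
  rw [hlhs]
  exact mul_le_mul_of_nonneg_left (le_trans (le_of_eq hsum.symm) hbound)
    (pow_nonneg ht2.le f)
end

section
/- In the canonical correlated Gaussian pair setting, for every ε > 0 and every τ ≤ I_XY − σ_XY / Real.sqrt ε, one has P[L(X, Y) < τ] ≤ ε. (Equivalently, the probability that a correctly matched pair fails the threshold test H_τ is at most ε.) -/
open MeasureTheory ProbabilityTheory Real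

namespace FNB

lemma int_pow_exp (n : ℕ) (hn : n ≤ 4) :
    Integrable (fun x : ℝ => x ^ n * Real.exp (-(1/2) * x ^ 2)) := by
  have hd : Integrable (fun x : ℝ => 65 * Real.exp (-(1/4) * x ^ 2)) :=
    (integrable_exp_neg_mul_sq (by norm_num)).const_mul 65
  refine hd.mono' ?_ ?_
  · exact ((measurable_id.pow_const n).mul
      (((measurable_id.pow_const 2).const_mul _).exp)).aestronglyMeasurable
  · refine Filter.Eventually.of_forall fun x => ?_
    have h1 : |x| ^ n ≤ 1 + x ^ 4 := by
      rcases le_or_gt (|x|) 1 with h | h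
      · have h0 := pow_le_one₀ (abs_nonneg x) h (n := n)
        nlinarith [pow_nonneg (pow_nonneg (abs_nonneg x) 2) 2, sq_abs x, sq_nonneg (x^2)]
      · have h2 : |x| ^ n ≤ |x| ^ 4 := pow_le_pow_right₀ h.le hn
        have h3 : |x| ^ 4 = x ^ 4 := by
          rw [← abs_pow]; exact abs_of_nonneg (by positivity)
        nlinarith
    have hE : 1 + x^2/8 ≤ Real.exp (x^2/8) := by
      have := Real.add_one_le_exp (x^2/8); linarith
    have hEE : Real.exp (x^2/8) * Real.exp (x^2/8) = Real.exp ((1/4) * x^2) := by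
      rw [← Real.exp_add]; ring_nf
    have h2 : x ^ 4 ≤ 64 * Real.exp ((1/4) * x ^ 2) := by
      nlinarith [Real.exp_pos (x^2/8), sq_nonneg x]
    have hCA : Real.exp ((1/4) * x^2) * Real.exp (-(1/2) * x^2) = Real.exp (-(1/4) * x^2) := by
      rw [← Real.exp_add]; ring_nf
    have hApos : (0:ℝ) < Real.exp (-(1/2) * x^2) := Real.exp_pos _
    have : ‖x ^ n * Real.exp (-(1/2) * x ^ 2)‖ = |x|^n * Real.exp (-(1/2) * x^2) := by
      rw [norm_mul, Real.norm_eq_abs, Real.norm_eq_abs, abs_pow, abs_of_pos hApos]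
    rw [this]
    have hle : |x|^n ≤ 65 * Real.exp ((1/4) * x^2) := by
      have : (1:ℝ) ≤ Real.exp ((1/4) * x^2) := by
        rw [← Real.exp_zero]; exact Real.exp_le_exp.2 (by positivity)
      nlinarith
    calc |x|^n * Real.exp (-(1/2) * x^2)
        ≤ (65 * Real.exp ((1/4) * x^2)) * Real.exp (-(1/2) * x^2) :=
          mul_le_mul_of_nonneg_right hle hApos.le
      _ = 65 * Real.exp (-(1/4) * x^2) := by rw [mul_assoc, hCA]

lemma int_exp : Integrable (fun x : ℝ => Real.exp (-(1/2) * x ^ 2)) :=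
  integrable_exp_neg_mul_sq (by norm_num)

lemma hderiv_exp (x : ℝ) :
    HasDerivAt (fun x : ℝ => Real.exp (-(1/2) * x ^ 2)) (-x * Real.exp (-(1/2) * x ^ 2)) x := by
  have h : HasDerivAt (fun x : ℝ => -(1/2 : ℝ) * x ^ 2) (-x) x := by
    have := (hasDerivAt_pow 2 x).const_mul (-(1/2 : ℝ))
    refine this.congr_deriv ?_; norm_num [id_eq]; ring_nf
  have := h.exp
  convert this using 1; ring

lemma J0 : (∫ x : ℝ, Real.exp (-(1/2) * x ^ 2)) = Real.sqrt (2 * π) := by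
  have := integral_gaussian (1/2)
  rw [this, show π/(1/2 : ℝ) = 2*π by ring]

lemma J1 : (∫ x : ℝ, x ^ 1 * Real.exp (-(1/2) * x ^ 2)) = 0 := by
  refine integral_eq_zero_of_hasDerivAt_of_integrable
    (f := fun x : ℝ => -Real.exp (-(1/2) * x ^ 2)) (fun x => ?_) (int_pow_exp 1 (by norm_num))
    int_exp.neg
  have := (hderiv_exp x).neg
  refine this.congr_deriv ?_; ring

lemma J2 : (∫ x : ℝ, x ^ 2 * Real.exp (-(1/2) * x ^ 2)) = Real.sqrt (2 * π) := by
  have h0 : (∫ x : ℝ, (x ^ 2 * Real.exp (-(1/2) * x ^ 2) - Real.exp (-(1/2) * x ^ 2))) = 0 := by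
    refine integral_eq_zero_of_hasDerivAt_of_integrable
      (f := fun x : ℝ => -x * Real.exp (-(1/2) * x ^ 2)) (fun x => ?_)
      ((int_pow_exp 2 (by norm_num)).sub int_exp) ?_
    · have := ((hasDerivAt_id x).neg).mul (hderiv_exp x)
      refine this.congr_deriv ?_; norm_num [id_eq]; ring_nf
    · have h := (int_pow_exp 1 (by norm_num)).neg
      refine h.congr (Filter.Eventually.of_forall fun x => ?_)
      simp only [Pi.neg_apply]; ring
  rw [integral_sub (int_pow_exp 2 (by norm_num)) int_exp, J0] at h0
  linarith

lemma J3 : (∫ x : ℝ, x ^ 3 * Real.exp (-(1/2) * x ^ 2)) = 0 := by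
  have hF : Integrable (fun x : ℝ => -(x ^ 2 + 2) * Real.exp (-(1/2) * x ^ 2)) := by
    have h := ((int_pow_exp 2 (by norm_num)).add (int_exp.const_mul 2)).neg
    refine h.congr (Filter.Eventually.of_forall fun x => ?_)
    simp only [Pi.neg_apply, Pi.add_apply]; ring
  refine integral_eq_zero_of_hasDerivAt_of_integrable
    (f := fun x : ℝ => -(x ^ 2 + 2) * Real.exp (-(1/2) * x ^ 2)) (fun x => ?_)
    (int_pow_exp 3 (by norm_num)) hF
  have := (((hasDerivAt_pow 2 x).add_const 2).neg).mul (hderiv_exp x)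
  refine this.congr_deriv ?_; norm_num [id_eq]; ring_nf

lemma J4 : (∫ x : ℝ, x ^ 4 * Real.exp (-(1/2) * x ^ 2)) = 3 * Real.sqrt (2 * π) := by
  have hF : Integrable (fun x : ℝ => -(x ^ 3 + 3 * x) * Real.exp (-(1/2) * x ^ 2)) := by
    have h := ((int_pow_exp 3 (by norm_num)).add ((int_pow_exp 1 (by norm_num)).const_mul 3)).neg
    refine h.congr (Filter.Eventually.of_forall fun x => ?_)
    simp only [Pi.neg_apply, Pi.add_apply]; ring
  have h0 : (∫ x : ℝ, (x ^ 4 * Real.exp (-(1/2) * x ^ 2) - 3 * Real.exp (-(1/2) * x ^ 2))) = 0 := by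
    refine integral_eq_zero_of_hasDerivAt_of_integrable
      (f := fun x : ℝ => -(x ^ 3 + 3 * x) * Real.exp (-(1/2) * x ^ 2)) (fun x => ?_)
      ((int_pow_exp 4 (by norm_num)).sub (int_exp.const_mul 3)) hF
    have := (((hasDerivAt_pow 3 x).add ((hasDerivAt_id x).const_mul 3)).neg).mul (hderiv_exp x)
    refine this.congr_deriv ?_; norm_num [id_eq]; ring_nf
  rw [integral_sub (int_pow_exp 4 (by norm_num)) (int_exp.const_mul 3),
    integral_const_mul, J0] at h0
  linarith

noncomputable def gm : Measure ℝ := gaussianReal 0 1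

instance : IsProbabilityMeasure gm := by unfold gm; infer_instance

lemma pdf_eq (x : ℝ) :
    gaussianPDFReal 0 1 x = (Real.sqrt (2*π))⁻¹ * Real.exp (-(1/2) * x^2) := by
  rw [gaussianPDFReal]
  simp only [NNReal.coe_one, mul_one, sub_zero]
  rw [show -x^2/(2:ℝ) = -(1/2)*x^2 by ring]

lemma gm_eq : gm = volume.withDensity (gaussianPDF 0 1) :=
  gaussianReal_of_var_ne_zero 0 one_ne_zero

lemma integrable_gm_iff (f : ℝ → ℝ) :
    Integrable f gm ↔ Integrable (fun x => f x * gaussianPDFReal 0 1 x) volume := by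
  rw [gm_eq,
    integrable_withDensity_iff (measurable_gaussianPDF 0 1)
      (Filter.Eventually.of_forall fun x => ENNReal.ofReal_lt_top)]
  exact integrable_congr (Filter.Eventually.of_forall fun x => by
    simp only [gaussianPDF_def]
    rw [ENNReal.toReal_ofReal (gaussianPDFReal_nonneg 0 1 x)])

lemma integral_gm (f : ℝ → ℝ) :
    ∫ x, f x ∂gm = ∫ x, gaussianPDFReal 0 1 x * f x := by
  rw [gm_eq]
  have h := integral_withDensity_eq_integral_smul (μ := volume)
    ((measurable_gaussianPDFReal 0 1).real_toNNReal) f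
  refine Eq.trans ?_ (h.trans ?_)
  · rfl
  · congr 1; funext x
    rw [NNReal.smul_def, Real.coe_toNNReal _ (gaussianPDFReal_nonneg 0 1 x), smul_eq_mul]

lemma int_gauss (n : ℕ) (hn : n ≤ 4) : Integrable (fun x : ℝ => x ^ n) gm := by
  rw [integrable_gm_iff (fun x : ℝ => x ^ n)]
  have h := (int_pow_exp n hn).const_mul ((Real.sqrt (2*π))⁻¹)
  refine h.congr (Filter.Eventually.of_forall fun x => ?_)
  simp only [pdf_eq]; ring

lemma sqrt2pi_pos : 0 < Real.sqrt (2*π) := Real.sqrt_pos.2 (by positivity)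

lemma mom (n : ℕ) :
    ∫ x, x ^ n ∂gm = (Real.sqrt (2*π))⁻¹ * ∫ x, x ^ n * Real.exp (-(1/2) * x^2) := by
  rw [integral_gm]
  rw [show (fun x : ℝ => gaussianPDFReal 0 1 x * x ^ n)
      = fun x : ℝ => (Real.sqrt (2*π))⁻¹ * (x ^ n * Real.exp (-(1/2) * x^2)) from
    funext fun x => by simp only [pdf_eq]; ring]
  rw [integral_const_mul]

lemma mom0 : ∫ x, x ^ 0 ∂gm = 1 := by simp
lemma mom1 : ∫ x, x ^ 1 ∂gm = 0 := by rw [mom 1, J1, mul_zero]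
lemma mom2 : ∫ x, x ^ 2 ∂gm = 1 := by
  rw [mom 2, J2, inv_mul_cancel₀ sqrt2pi_pos.ne']
lemma mom3 : ∫ x, x ^ 3 ∂gm = 0 := by rw [mom 3, J3, mul_zero]
lemma mom4 : ∫ x, x ^ 4 ∂gm = 3 := by
  rw [mom 4, J4, ← mul_assoc, mul_comm ((Real.sqrt (2*π))⁻¹) 3, mul_assoc,
    inv_mul_cancel₀ sqrt2pi_pos.ne', mul_one]

noncomputable def pim (d : ℕ) : Measure (Fin d → ℝ) := Measure.pi fun _ => gm

instance (d : ℕ) : IsProbabilityMeasure (pim d) := by unfold pim; infer_instance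

variable {d : ℕ}

lemma map_eval (i : Fin d) :
    Measure.map (fun x : Fin d → ℝ => x i) (pim d) = gm := by
  ext s hs
  rw [Measure.map_apply (measurable_pi_apply i) hs]
  have hp : (fun x : Fin d → ℝ => x i) ⁻¹' s
      = Set.pi Set.univ (Function.update (fun _ : Fin d => (Set.univ : Set ℝ)) i s) := by
    ext x
    simp only [Set.mem_preimage, Set.mem_univ_pi, Function.update_apply]
    constructor
    · intro h k
      split_ifs with hk
      · subst hk; exact h
      · trivial
    · intro h
      have := h i
      simpa using this
  rw [hp]
  unfold pim
  rw [Measure.pi_pi]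
  rw [Fintype.prod_eq_single i (fun j hj => by
    rw [Function.update_of_ne hj]; exact measure_univ)]
  rw [Function.update_self]

lemma map_pair (i j : Fin d) (hij : i ≠ j) :
    Measure.map (fun x : Fin d → ℝ => (x i, x j)) (pim d) = gm.prod gm := by
  refine (Measure.prod_eq fun s t hs ht => ?_).symm
  rw [Measure.map_apply ((measurable_pi_apply i).prodMk (measurable_pi_apply j)) (hs.prod ht)]
  have hp : (fun x : Fin d → ℝ => (x i, x j)) ⁻¹' (s ×ˢ t)
      = Set.pi Set.univ
        (Function.update (Function.update (fun _ : Fin d => (Set.univ : Set ℝ)) i s) j t) := by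
    ext x
    simp only [Set.mem_preimage, Set.mem_prod, Set.mem_univ_pi, Function.update_apply]
    constructor
    · rintro ⟨h1, h2⟩ k
      split_ifs with hk1 hk2
      · subst hk1; exact h2
      · subst hk2; exact h1
      · trivial
    · intro h
      refine ⟨?_, ?_⟩
      · have := h i
        simpa [hij] using this
      · have := h j
        simpa using this
  rw [hp]
  unfold pim
  rw [Measure.pi_pi]
  rw [← Finset.prod_subset (Finset.subset_univ ({i, j} : Finset (Fin d))) (fun k _ hk => by
    simp only [Finset.mem_insert, Finset.mem_singleton, not_or] at hk
    rw [Function.update_of_ne hk.2, Function.update_of_ne hk.1]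
    exact measure_univ)]
  rw [Finset.prod_pair hij, Function.update_of_ne hij, Function.update_self,
    Function.update_self]

lemma pim_int_pow (i : Fin d) (n : ℕ) (hn : n ≤ 4) :
    Integrable (fun x : Fin d → ℝ => (x i) ^ n) (pim d) := by
  have key := integrable_map_measure (f := fun x : Fin d → ℝ => x i) (g := fun t : ℝ => t ^ n)
    (by rw [map_eval]; exact (measurable_id.pow_const n).aestronglyMeasurable)
    (measurable_pi_apply i).aemeasurable
  rw [map_eval] at key
  exact key.mp (int_gauss n hn)

lemma pim_integral_pow (i : Fin d) (n : ℕ) :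
    ∫ x, (x i) ^ n ∂(pim d) = ∫ t, t ^ n ∂gm := by
  rw [← map_eval (i := i),
    integral_map (measurable_pi_apply i).aemeasurable
      ((continuous_pow n).measurable.aestronglyMeasurable (f := fun t : ℝ => t ^ n))]

lemma pim_int_pow2 (i j : Fin d) (hij : i ≠ j) (m n : ℕ) (hm : m ≤ 4) (hn : n ≤ 4) :
    Integrable (fun x : Fin d → ℝ => (x i) ^ m * (x j) ^ n) (pim d) := by
  have hg : Integrable (fun q : ℝ × ℝ => q.1 ^ m * q.2 ^ n) (gm.prod gm) :=
    (int_gauss m hm).mul_prod (int_gauss n hn)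
  have key := integrable_map_measure (f := fun x : Fin d → ℝ => (x i, x j))
    (g := fun q : ℝ × ℝ => q.1 ^ m * q.2 ^ n)
    (by rw [map_pair i j hij]
        exact ((measurable_fst.pow_const m).mul (measurable_snd.pow_const n)).aestronglyMeasurable)
    ((measurable_pi_apply i).prodMk (measurable_pi_apply j)).aemeasurable
  rw [map_pair i j hij] at key
  exact key.mp hg

lemma pim_integral_pow2 (i j : Fin d) (hij : i ≠ j) (m n : ℕ) :
    ∫ x, (x i) ^ m * (x j) ^ n ∂(pim d) = (∫ t, t ^ m ∂gm) * (∫ t, t ^ n ∂gm) := by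
  rw [← integral_prod_mul (μ := gm) (ν := gm) (f := fun t : ℝ => t ^ m) (g := fun t : ℝ => t ^ n),
    ← map_pair i j hij,
    integral_map ((measurable_pi_apply i).prodMk (measurable_pi_apply j)).aemeasurable
      ((measurable_fst.pow_const m).mul (measurable_snd.pow_const n)).aestronglyMeasurable]

noncomputable def mu (d : ℕ) : Measure ((Fin d → ℝ) × (Fin d → ℝ)) := (pim d).prod (pim d)

instance (d : ℕ) : IsProbabilityMeasure (mu d) := by unfold mu; infer_instance

def mono (d : ℕ) (i : Fin d) (m n : ℕ) : ((Fin d → ℝ) × (Fin d → ℝ)) → ℝ :=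
  fun p => (p.1 i) ^ m * (p.2 i) ^ n

def mono2 (d : ℕ) (i j : Fin d) (a b c e : ℕ) : ((Fin d → ℝ) × (Fin d → ℝ)) → ℝ :=
  fun p => ((p.1 i) ^ a * (p.1 j) ^ b) * ((p.2 i) ^ c * (p.2 j) ^ e)

variable {d : ℕ}

lemma int_mono (i : Fin d) (m n : ℕ) (hm : m ≤ 4) (hn : n ≤ 4) :
    Integrable (mono d i m n) (mu d) :=
  (pim_int_pow i m hm).mul_prod (pim_int_pow i n hn)

lemma integral_mono (i : Fin d) (m n : ℕ) :
    ∫ p, mono d i m n p ∂(mu d) = (∫ t, t ^ m ∂gm) * (∫ t, t ^ n ∂gm) := by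
  unfold mono mu
  rw [integral_prod_mul (f := fun x : Fin d → ℝ => (x i) ^ m) (g := fun x : Fin d → ℝ => (x i) ^ n),
    pim_integral_pow, pim_integral_pow]

lemma int_mono2 (i j : Fin d) (hij : i ≠ j) (a b c e : ℕ)
    (ha : a ≤ 4) (hb : b ≤ 4) (hc : c ≤ 4) (he : e ≤ 4) :
    Integrable (mono2 d i j a b c e) (mu d) :=
  (pim_int_pow2 i j hij a b ha hb).mul_prod (pim_int_pow2 i j hij c e hc he)

lemma integral_mono2 (i j : Fin d) (hij : i ≠ j) (a b c e : ℕ) :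
    ∫ p, mono2 d i j a b c e p ∂(mu d)
      = ((∫ t, t ^ a ∂gm) * (∫ t, t ^ b ∂gm)) * ((∫ t, t ^ c ∂gm) * (∫ t, t ^ e ∂gm)) := by
  unfold mono2 mu
  rw [integral_prod_mul (f := fun x : Fin d → ℝ => (x i) ^ a * (x j) ^ b)
      (g := fun x : Fin d → ℝ => (x i) ^ c * (x j) ^ e),
    pim_integral_pow2 i j hij, pim_integral_pow2 i j hij]

/-- The centered per-coordinate term of the log-likelihood ratio. -/
def Zf (d : ℕ) (a c : ℝ) (i : Fin d) : ((Fin d → ℝ) × (Fin d → ℝ)) → ℝ :=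
  fun p => a * mono d i 2 0 p - a * mono d i 0 2 p + c * mono d i 1 1 p

lemma int_Zf (a c : ℝ) (i : Fin d) : Integrable (Zf d a c i) (mu d) :=
  (((int_mono i 2 0 (by norm_num) (by norm_num)).const_mul a).sub
    ((int_mono i 0 2 (by norm_num) (by norm_num)).const_mul a)).add
    ((int_mono i 1 1 (by norm_num) (by norm_num)).const_mul c)

lemma integral_Zf (a c : ℝ) (i : Fin d) : ∫ p, Zf d a c i p ∂(mu d) = 0 := by
  have h20 : Integrable (fun p => a * mono d i 2 0 p) (mu d) :=
    (int_mono i 2 0 (by norm_num) (by norm_num)).const_mul a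
  have h02 : Integrable (fun p => a * mono d i 0 2 p) (mu d) :=
    (int_mono i 0 2 (by norm_num) (by norm_num)).const_mul a
  have h11 : Integrable (fun p => c * mono d i 1 1 p) (mu d) :=
    (int_mono i 1 1 (by norm_num) (by norm_num)).const_mul c
  have hsub : Integrable (fun p => a * mono d i 2 0 p - a * mono d i 0 2 p) (mu d) := h20.sub h02
  unfold Zf
  rw [integral_add hsub h11, integral_sub h20 h02,
    integral_const_mul, integral_const_mul, integral_const_mul,
    integral_mono, integral_mono, integral_mono, mom0, mom1, mom2]
  ring

lemma ZZ_diag_eq (a c : ℝ) (i : Fin d) :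
    (fun p => Zf d a c i p * Zf d a c i p)
      = fun p => (a^2) * mono d i 4 0 p + (a^2) * mono d i 0 4 p
          + (c^2 - 2*a^2) * mono d i 2 2 p + (2*a*c) * mono d i 3 1 p
          - (2*a*c) * mono d i 1 3 p := by
  funext p; simp only [Zf, mono]; ring

lemma int_ZZ_diag (a c : ℝ) (i : Fin d) :
    Integrable (fun p => Zf d a c i p * Zf d a c i p) (mu d) := by
  rw [ZZ_diag_eq]
  have h1 : Integrable (fun p => (a^2) * mono d i 4 0 p) (mu d) :=
    (int_mono i 4 0 (by norm_num) (by norm_num)).const_mul _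
  have h2 : Integrable (fun p => (a^2) * mono d i 0 4 p) (mu d) :=
    (int_mono i 0 4 (by norm_num) (by norm_num)).const_mul _
  have h3 : Integrable (fun p => (c^2 - 2*a^2) * mono d i 2 2 p) (mu d) :=
    (int_mono i 2 2 (by norm_num) (by norm_num)).const_mul _
  have h4 : Integrable (fun p => (2*a*c) * mono d i 3 1 p) (mu d) :=
    (int_mono i 3 1 (by norm_num) (by norm_num)).const_mul _
  have h5 : Integrable (fun p => (2*a*c) * mono d i 1 3 p) (mu d) :=
    (int_mono i 1 3 (by norm_num) (by norm_num)).const_mul _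
  have h12 : Integrable (fun p => (a^2) * mono d i 4 0 p + (a^2) * mono d i 0 4 p) (mu d) :=
    h1.add h2
  have h123 : Integrable (fun p => (a^2) * mono d i 4 0 p + (a^2) * mono d i 0 4 p
      + (c^2 - 2*a^2) * mono d i 2 2 p) (mu d) := h12.add h3
  have h1234 : Integrable (fun p => (a^2) * mono d i 4 0 p + (a^2) * mono d i 0 4 p
      + (c^2 - 2*a^2) * mono d i 2 2 p + (2*a*c) * mono d i 3 1 p) (mu d) := h123.add h4
  exact h1234.sub h5

lemma integral_ZZ_diag (a c : ℝ) (i : Fin d) :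
    ∫ p, Zf d a c i p * Zf d a c i p ∂(mu d) = 4 * a^2 + c^2 := by
  have h1 : Integrable (fun p => (a^2) * mono d i 4 0 p) (mu d) :=
    (int_mono i 4 0 (by norm_num) (by norm_num)).const_mul _
  have h2 : Integrable (fun p => (a^2) * mono d i 0 4 p) (mu d) :=
    (int_mono i 0 4 (by norm_num) (by norm_num)).const_mul _
  have h3 : Integrable (fun p => (c^2 - 2*a^2) * mono d i 2 2 p) (mu d) :=
    (int_mono i 2 2 (by norm_num) (by norm_num)).const_mul _
  have h4 : Integrable (fun p => (2*a*c) * mono d i 3 1 p) (mu d) :=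
    (int_mono i 3 1 (by norm_num) (by norm_num)).const_mul _
  have h5 : Integrable (fun p => (2*a*c) * mono d i 1 3 p) (mu d) :=
    (int_mono i 1 3 (by norm_num) (by norm_num)).const_mul _
  have h12 : Integrable (fun p => (a^2) * mono d i 4 0 p + (a^2) * mono d i 0 4 p) (mu d) :=
    h1.add h2
  have h123 : Integrable (fun p => (a^2) * mono d i 4 0 p + (a^2) * mono d i 0 4 p
      + (c^2 - 2*a^2) * mono d i 2 2 p) (mu d) := h12.add h3
  have h1234 : Integrable (fun p => (a^2) * mono d i 4 0 p + (a^2) * mono d i 0 4 p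
      + (c^2 - 2*a^2) * mono d i 2 2 p + (2*a*c) * mono d i 3 1 p) (mu d) := h123.add h4
  rw [ZZ_diag_eq, integral_sub h1234 h5, integral_add h123 h4, integral_add h12 h3,
    integral_add h1 h2, integral_const_mul, integral_const_mul, integral_const_mul,
    integral_const_mul, integral_const_mul, integral_mono, integral_mono, integral_mono,
    integral_mono, integral_mono, mom0, mom1, mom2, mom3, mom4]
  ring

lemma ZZ_ne_eq (a c a' c' : ℝ) (i j : Fin d) :
    (fun p => Zf d a c i p * Zf d a' c' j p)
      = fun p => (a*a') * mono2 d i j 2 2 0 0 p - (a*a') * mono2 d i j 2 0 0 2 p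
          + (a*c') * mono2 d i j 2 1 0 1 p - (a*a') * mono2 d i j 0 2 2 0 p
          + (a*a') * mono2 d i j 0 0 2 2 p - (a*c') * mono2 d i j 0 1 2 1 p
          + (c*a') * mono2 d i j 1 2 1 0 p - (c*a') * mono2 d i j 1 0 1 2 p
          + (c*c') * mono2 d i j 1 1 1 1 p := by
  funext p; simp only [Zf, mono, mono2]; ring

lemma int_ZZ_ne (a c a' c' : ℝ) (i j : Fin d) (hij : i ≠ j) :
    Integrable (fun p => Zf d a c i p * Zf d a' c' j p) (mu d) := by
  rw [ZZ_ne_eq]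
  have m1 : Integrable (fun p => (a*a') * mono2 d i j 2 2 0 0 p) (mu d) :=
    (int_mono2 i j hij 2 2 0 0 (by norm_num) (by norm_num) (by norm_num) (by norm_num)).const_mul _
  have m2 : Integrable (fun p => (a*a') * mono2 d i j 2 0 0 2 p) (mu d) :=
    (int_mono2 i j hij 2 0 0 2 (by norm_num) (by norm_num) (by norm_num) (by norm_num)).const_mul _
  have m3 : Integrable (fun p => (a*c') * mono2 d i j 2 1 0 1 p) (mu d) :=
    (int_mono2 i j hij 2 1 0 1 (by norm_num) (by norm_num) (by norm_num) (by norm_num)).const_mul _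
  have m4 : Integrable (fun p => (a*a') * mono2 d i j 0 2 2 0 p) (mu d) :=
    (int_mono2 i j hij 0 2 2 0 (by norm_num) (by norm_num) (by norm_num) (by norm_num)).const_mul _
  have m5 : Integrable (fun p => (a*a') * mono2 d i j 0 0 2 2 p) (mu d) :=
    (int_mono2 i j hij 0 0 2 2 (by norm_num) (by norm_num) (by norm_num) (by norm_num)).const_mul _
  have m6 : Integrable (fun p => (a*c') * mono2 d i j 0 1 2 1 p) (mu d) :=
    (int_mono2 i j hij 0 1 2 1 (by norm_num) (by norm_num) (by norm_num) (by norm_num)).const_mul _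
  have m7 : Integrable (fun p => (c*a') * mono2 d i j 1 2 1 0 p) (mu d) :=
    (int_mono2 i j hij 1 2 1 0 (by norm_num) (by norm_num) (by norm_num) (by norm_num)).const_mul _
  have m8 : Integrable (fun p => (c*a') * mono2 d i j 1 0 1 2 p) (mu d) :=
    (int_mono2 i j hij 1 0 1 2 (by norm_num) (by norm_num) (by norm_num) (by norm_num)).const_mul _
  have m9 : Integrable (fun p => (c*c') * mono2 d i j 1 1 1 1 p) (mu d) :=
    (int_mono2 i j hij 1 1 1 1 (by norm_num) (by norm_num) (by norm_num) (by norm_num)).const_mul _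
  exact ((((((((m1.sub m2).add m3).sub m4).add m5).sub m6).add m7).sub m8).add m9)

lemma integral_ZZ_ne (a c a' c' : ℝ) (i j : Fin d) (hij : i ≠ j) :
    ∫ p, Zf d a c i p * Zf d a' c' j p ∂(mu d) = 0 := by
  have m1 : Integrable (fun p => (a*a') * mono2 d i j 2 2 0 0 p) (mu d) :=
    (int_mono2 i j hij 2 2 0 0 (by norm_num) (by norm_num) (by norm_num) (by norm_num)).const_mul _
  have m2 : Integrable (fun p => (a*a') * mono2 d i j 2 0 0 2 p) (mu d) :=
    (int_mono2 i j hij 2 0 0 2 (by norm_num) (by norm_num) (by norm_num) (by norm_num)).const_mul _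
  have m3 : Integrable (fun p => (a*c') * mono2 d i j 2 1 0 1 p) (mu d) :=
    (int_mono2 i j hij 2 1 0 1 (by norm_num) (by norm_num) (by norm_num) (by norm_num)).const_mul _
  have m4 : Integrable (fun p => (a*a') * mono2 d i j 0 2 2 0 p) (mu d) :=
    (int_mono2 i j hij 0 2 2 0 (by norm_num) (by norm_num) (by norm_num) (by norm_num)).const_mul _
  have m5 : Integrable (fun p => (a*a') * mono2 d i j 0 0 2 2 p) (mu d) :=
    (int_mono2 i j hij 0 0 2 2 (by norm_num) (by norm_num) (by norm_num) (by norm_num)).const_mul _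
  have m6 : Integrable (fun p => (a*c') * mono2 d i j 0 1 2 1 p) (mu d) :=
    (int_mono2 i j hij 0 1 2 1 (by norm_num) (by norm_num) (by norm_num) (by norm_num)).const_mul _
  have m7 : Integrable (fun p => (c*a') * mono2 d i j 1 2 1 0 p) (mu d) :=
    (int_mono2 i j hij 1 2 1 0 (by norm_num) (by norm_num) (by norm_num) (by norm_num)).const_mul _
  have m8 : Integrable (fun p => (c*a') * mono2 d i j 1 0 1 2 p) (mu d) :=
    (int_mono2 i j hij 1 0 1 2 (by norm_num) (by norm_num) (by norm_num) (by norm_num)).const_mul _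
  have m9 : Integrable (fun p => (c*c') * mono2 d i j 1 1 1 1 p) (mu d) :=
    (int_mono2 i j hij 1 1 1 1 (by norm_num) (by norm_num) (by norm_num) (by norm_num)).const_mul _
  have k2 : Integrable (fun p => (a*a') * mono2 d i j 2 2 0 0 p - (a*a') * mono2 d i j 2 0 0 2 p) (mu d) := m1.sub m2
  have k3 : Integrable (fun p => (a*a') * mono2 d i j 2 2 0 0 p - (a*a') * mono2 d i j 2 0 0 2 p + (a*c') * mono2 d i j 2 1 0 1 p) (mu d) := k2.add m3
  have k4 : Integrable (fun p => (a*a') * mono2 d i j 2 2 0 0 p - (a*a') * mono2 d i j 2 0 0 2 p + (a*c') * mono2 d i j 2 1 0 1 p - (a*a') * mono2 d i j 0 2 2 0 p) (mu d) := k3.sub m4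
  have k5 : Integrable (fun p => (a*a') * mono2 d i j 2 2 0 0 p - (a*a') * mono2 d i j 2 0 0 2 p + (a*c') * mono2 d i j 2 1 0 1 p - (a*a') * mono2 d i j 0 2 2 0 p + (a*a') * mono2 d i j 0 0 2 2 p) (mu d) := k4.add m5
  have k6 : Integrable (fun p => (a*a') * mono2 d i j 2 2 0 0 p - (a*a') * mono2 d i j 2 0 0 2 p + (a*c') * mono2 d i j 2 1 0 1 p - (a*a') * mono2 d i j 0 2 2 0 p + (a*a') * mono2 d i j 0 0 2 2 p - (a*c') * mono2 d i j 0 1 2 1 p) (mu d) := k5.sub m6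
  have k7 : Integrable (fun p => (a*a') * mono2 d i j 2 2 0 0 p - (a*a') * mono2 d i j 2 0 0 2 p + (a*c') * mono2 d i j 2 1 0 1 p - (a*a') * mono2 d i j 0 2 2 0 p + (a*a') * mono2 d i j 0 0 2 2 p - (a*c') * mono2 d i j 0 1 2 1 p + (c*a') * mono2 d i j 1 2 1 0 p) (mu d) := k6.add m7
  have k8 : Integrable (fun p => (a*a') * mono2 d i j 2 2 0 0 p - (a*a') * mono2 d i j 2 0 0 2 p + (a*c') * mono2 d i j 2 1 0 1 p - (a*a') * mono2 d i j 0 2 2 0 p + (a*a') * mono2 d i j 0 0 2 2 p - (a*c') * mono2 d i j 0 1 2 1 p + (c*a') * mono2 d i j 1 2 1 0 p - (c*a') * mono2 d i j 1 0 1 2 p) (mu d) := k7.sub m8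
  rw [ZZ_ne_eq, integral_add k8 m9, integral_sub k7 m8, integral_add k6 m7,
    integral_sub k5 m6, integral_add k4 m5, integral_sub k3 m4, integral_add k2 m3,
    integral_sub m1 m2]
  simp only [integral_const_mul]
  rw [integral_mono2 i j hij, integral_mono2 i j hij, integral_mono2 i j hij,
    integral_mono2 i j hij, integral_mono2 i j hij, integral_mono2 i j hij,
    integral_mono2 i j hij, integral_mono2 i j hij, integral_mono2 i j hij,
    mom0, mom1, mom2]
  ring

lemma measurable_Zf (a c : ℝ) (i : Fin d) : Measurable (Zf d a c i) := by
  have h1 : Measurable fun p : (Fin d → ℝ) × (Fin d → ℝ) => p.1 i :=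
    (measurable_pi_apply i).comp measurable_fst
  have h2 : Measurable fun p : (Fin d → ℝ) × (Fin d → ℝ) => p.2 i :=
    (measurable_pi_apply i).comp measurable_snd
  unfold Zf mono
  exact ((((h1.pow_const 2).mul (h2.pow_const 0)).const_mul a).sub
    (((h1.pow_const 0).mul (h2.pow_const 2)).const_mul a)).add
    (((h1.pow_const 1).mul (h2.pow_const 1)).const_mul c)

end FNB

open FNB

/-- False-negative bound: if `τ ≤ I_XY − σ_XY/√ε`, then the probability that a
matched pair falls below the threshold `τ` is at most `ε`. -/
theorem false_negative_bound
    {Ω : Type*} [MeasurableSpace Ω] (P : Measure Ω) [IsProbabilityMeasure P]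
    (d : ℕ) (ρ : Fin d → ℝ) (hρ : ∀ i, -1 < ρ i ∧ ρ i < 1)
    (X W Y : Ω → Fin d → ℝ)
    (hlaw : Measure.map (fun ω => (X ω, W ω)) P
      = (Measure.pi fun _ : Fin d => gaussianReal 0 1).prod
        (Measure.pi fun _ : Fin d => gaussianReal 0 1))
    (hY : ∀ ω i, Y ω i = ρ i * X ω i + Real.sqrt (1 - (ρ i)^2) * W ω i)
    (L : (Fin d → ℝ) → (Fin d → ℝ) → ℝ)
    (hL : ∀ x y, L x y = ∑ i, (-(1/2) * Real.log (1 - (ρ i)^2)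
      - ((ρ i)^2 * ((x i)^2 + (y i)^2) - 2 * ρ i * x i * y i) / (2 * (1 - (ρ i)^2))))
    (IXY σXY : ℝ)
    (hI : IXY = -(1/2) * ∑ i, Real.log (1 - (ρ i)^2))
    (hσ : σXY = Real.sqrt (∑ i, (ρ i)^2))
    (ε : ℝ) (hε : 0 < ε) (τ : ℝ) (hτ : τ ≤ IXY - σXY / Real.sqrt ε) :
    (P {ω | L (X ω) (Y ω) < τ}).toReal ≤ ε := by
  classical
  have hρ2 : ∀ i, 0 < 1 - ρ i ^ 2 := fun i => by nlinarith [(hρ i).1, (hρ i).2]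
  have hs2 : ∀ i, Real.sqrt (1 - ρ i ^ 2) ^ 2 = 1 - ρ i ^ 2 :=
    fun i => Real.sq_sqrt (hρ2 i).le
  set g : (Fin d → ℝ) × (Fin d → ℝ) → ℝ :=
    fun p => ∑ i, Zf d (ρ i ^ 2 / 2) (ρ i * Real.sqrt (1 - ρ i ^ 2)) i p with hgdef
  -- Step 1 : pointwise identity
  have hpt : ∀ ω, L (X ω) (Y ω) = IXY + g (X ω, W ω) := by
    intro ω
    have hg' : g (X ω, W ω)
        = ∑ i, Zf d (ρ i ^ 2 / 2) (ρ i * Real.sqrt (1 - ρ i ^ 2)) i (X ω, W ω) := rfl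
    rw [hL, hI, hg', Finset.mul_sum, ← Finset.sum_add_distrib]
    refine Finset.sum_congr rfl fun i _ => ?_
    have hne : (2 * (1 - ρ i ^ 2)) ≠ 0 := ne_of_gt (mul_pos two_pos (hρ2 i))
    have key : Zf d (ρ i ^ 2 / 2) (ρ i * Real.sqrt (1 - ρ i ^ 2)) i (X ω, W ω)
        = -((ρ i ^ 2 * ((X ω i)^2 + (Y ω i)^2) - 2 * ρ i * X ω i * Y ω i)
            / (2 * (1 - ρ i ^ 2))) := by
      have hzi : Zf d (ρ i ^ 2 / 2) (ρ i * Real.sqrt (1 - ρ i ^ 2)) i (X ω, W ω)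
          = ρ i ^ 2 / 2 * (X ω i) ^ 2 - ρ i ^ 2 / 2 * (W ω i) ^ 2
            + (ρ i * Real.sqrt (1 - ρ i ^ 2)) * (X ω i * W ω i) := by
        simp only [Zf, mono]; ring
      rw [hzi, hY ω i, ← neg_div, eq_div_iff hne]
      linear_combination (ρ i ^ 2 * (W ω i) ^ 2) * hs2 i
    rw [key]; ring
  -- Step 2 : transfer to the product Gaussian measure
  have hAE : AEMeasurable (fun ω => (X ω, W ω)) P := by
    by_contra hc
    rw [Measure.map_of_not_aemeasurable hc] at hlaw
    have h1 := congrArg (fun m : Measure ((Fin d → ℝ) × (Fin d → ℝ)) => m Set.univ) hlaw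
    simp [Measure.prod_prod] at h1
  have hgmeas : Measurable g := by
    rw [hgdef]
    exact Finset.measurable_sum _ (fun i _ => measurable_Zf _ _ i)
  have hSmeas : MeasurableSet {p : (Fin d → ℝ) × (Fin d → ℝ) | IXY + g p < τ} :=
    measurableSet_lt (measurable_const.add hgmeas) measurable_const
  have hset : {ω | L (X ω) (Y ω) < τ} = (fun ω => (X ω, W ω)) ⁻¹' {p | IXY + g p < τ} := by
    ext ω
    simp only [Set.mem_setOf_eq, Set.mem_preimage, hpt ω]
  rw [hset, ← Measure.map_apply_of_aemeasurable hAE hSmeas, hlaw,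
    show (Measure.pi fun _ : Fin d => gaussianReal 0 1).prod
        (Measure.pi fun _ : Fin d => gaussianReal 0 1) = mu d from rfl]
  -- Step 3 : moments of g
  have hgint : Integrable g (mu d) := by
    rw [hgdef]
    exact integrable_finset_sum _ (fun i _ => int_Zf _ _ i)
  have hEg : ∫ p, g p ∂(mu d) = 0 := by
    rw [hgdef, integral_finset_sum _ (fun i _ => int_Zf _ _ i)]
    simp [integral_Zf]
  have hgg_eq : (fun p => g p * g p)
      = fun p => ∑ i, ∑ j, Zf d (ρ i ^ 2 / 2) (ρ i * Real.sqrt (1 - ρ i ^ 2)) i p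
          * Zf d (ρ j ^ 2 / 2) (ρ j * Real.sqrt (1 - ρ j ^ 2)) j p := by
    funext p
    rw [hgdef, Finset.sum_mul_sum]
  have hZZint : ∀ i j : Fin d,
      Integrable (fun p => Zf d (ρ i ^ 2 / 2) (ρ i * Real.sqrt (1 - ρ i ^ 2)) i p
        * Zf d (ρ j ^ 2 / 2) (ρ j * Real.sqrt (1 - ρ j ^ 2)) j p) (mu d) := by
    intro i j
    rcases eq_or_ne i j with rfl | hij
    · exact int_ZZ_diag _ _ i
    · exact int_ZZ_ne _ _ _ _ i j hij
  have hggint : Integrable (fun p => g p * g p) (mu d) := by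
    rw [hgg_eq]
    exact integrable_finset_sum _ (fun i _ => integrable_finset_sum _ (fun j _ => hZZint i j))
  have hEgg : ∫ p, g p * g p ∂(mu d) = ∑ i, ρ i ^ 2 := by
    rw [hgg_eq, integral_finset_sum _ (fun i _ => integrable_finset_sum _ (fun j _ => hZZint i j))]
    refine Finset.sum_congr rfl fun i _ => ?_
    rw [integral_finset_sum _ (fun j _ => hZZint i j)]
    have hterm : ∀ j : Fin d, (∫ p, Zf d (ρ i ^ 2 / 2) (ρ i * Real.sqrt (1 - ρ i ^ 2)) i p
        * Zf d (ρ j ^ 2 / 2) (ρ j * Real.sqrt (1 - ρ j ^ 2)) j p ∂(mu d))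
        = if i = j then ρ i ^ 2 else 0 := by
      intro j
      rcases eq_or_ne i j with rfl | hij
      · rw [if_pos rfl, integral_ZZ_diag]
        have := hs2 i
        nlinarith [this]
      · rw [if_neg hij, integral_ZZ_ne _ _ _ _ i j hij]
    simp only [hterm]
    simp
  -- Step 4 : Chebyshev
  set f : (Fin d → ℝ) × (Fin d → ℝ) → ℝ := fun p => IXY + g p with hfdef
  have hfmeas : AEStronglyMeasurable f (mu d) :=
    (measurable_const.add hgmeas).aestronglyMeasurable
  have hmem : MemLp f 2 (mu d) := by
    rw [memLp_two_iff_integrable_sq hfmeas]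
    have : (fun p => f p ^ 2)
        = fun p => (IXY ^ 2 + (2 * IXY) * g p) + g p * g p := by
      funext p; rw [hfdef]; ring
    rw [this]
    exact ((integrable_const _).add (hgint.const_mul _)).add hggint
  have hEf : ∫ p, f p ∂(mu d) = IXY := by
    rw [hfdef, integral_add (integrable_const _) hgint, hEg, integral_const]
    simp
  have hvar : variance f (mu d) = ∑ i, ρ i ^ 2 := by
    rw [variance_eq_sub hmem]
    have hsq : (f ^ 2 : _ → ℝ) = fun p => (IXY ^ 2 + (2 * IXY) * g p) + g p * g p := by
      funext p; simp only [Pi.pow_apply, hfdef]; ring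
    have hint0 : Integrable (fun p : (Fin d → ℝ) × (Fin d → ℝ) => (2 * IXY) * g p) (mu d) :=
      hgint.const_mul _
    have hint1 : Integrable (fun p : (Fin d → ℝ) × (Fin d → ℝ) => IXY ^ 2 + (2 * IXY) * g p)
        (mu d) := (integrable_const _).add hint0
    rw [hsq, integral_add hint1 hggint,
      integral_add (integrable_const _) hint0, integral_const,
      integral_const_mul, hEg, hEgg, hEf]
    simp
  -- case split on degenerate correlation
  by_cases hS0 : (∑ i, ρ i ^ 2) = 0
  · -- all correlations vanish : the event is empty
    have hρ0 : ∀ i, ρ i = 0 := by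
      intro i
      have h := (Finset.sum_eq_zero_iff_of_nonneg
        (fun j _ => sq_nonneg (ρ j))).1 hS0 i (Finset.mem_univ i)
      exact (pow_eq_zero_iff two_ne_zero).1 h
    have hg0 : ∀ p, g p = 0 := by
      intro p
      rw [hgdef]
      refine Finset.sum_eq_zero fun i _ => ?_
      simp [Zf, hρ0 i]
    have hτ' : τ ≤ IXY := by
      rw [hσ, hS0, Real.sqrt_zero, zero_div] at hτ
      linarith
    have : {p : (Fin d → ℝ) × (Fin d → ℝ) | IXY + g p < τ} = ∅ := by
      ext p
      simp only [Set.mem_setOf_eq, Set.mem_empty_iff_false, iff_false, not_lt, hg0 p, add_zero]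
      linarith
    rw [this]
    simp [hε.le]
  · have hSpos : 0 < ∑ i, ρ i ^ 2 :=
      lt_of_le_of_ne (Finset.sum_nonneg fun j _ => sq_nonneg (ρ j)) (Ne.symm hS0)
    have hσpos : 0 < σXY := by rw [hσ]; exact Real.sqrt_pos.2 hSpos
    have hsε : 0 < Real.sqrt ε := Real.sqrt_pos.2 hε
    have hcpos : 0 < σXY / Real.sqrt ε := div_pos hσpos hsε
    have hsub : {p : (Fin d → ℝ) × (Fin d → ℝ) | IXY + g p < τ}
        ⊆ {p | σXY / Real.sqrt ε ≤ |f p - ∫ q, f q ∂(mu d)|} := by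
      intro p hp
      simp only [Set.mem_setOf_eq] at hp ⊢
      rw [hEf, hfdef]
      have h1 : g p < -(σXY / Real.sqrt ε) := by linarith
      rw [abs_sub_comm]
      calc σXY / Real.sqrt ε ≤ -(g p) := by linarith
        _ ≤ |(-(g p))| := le_abs_self _
        _ = |IXY - (IXY + g p)| := by congr 1; ring
    have hcheb := meas_ge_le_variance_div_sq (μ := mu d) hmem hcpos
    have hval : variance f (mu d) / (σXY / Real.sqrt ε) ^ 2 = ε := by
      rw [hvar, div_pow, hσ, Real.sq_sqrt hSpos.le, Real.sq_sqrt hε.le]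
      field_simp
    rw [hval] at hcheb
    have hle : mu d {p : (Fin d → ℝ) × (Fin d → ℝ) | IXY + g p < τ} ≤ ENNReal.ofReal ε :=
      le_trans (measure_mono hsub) hcheb
    calc (mu d {p : (Fin d → ℝ) × (Fin d → ℝ) | IXY + g p < τ}).toReal
        ≤ (ENNReal.ofReal ε).toReal := ENNReal.toReal_mono ENNReal.ofReal_ne_top hle
      _ = ε := ENNReal.toReal_ofReal hε.le
end

section
/- Fix d ∈ ℕ and ρ : Fin d → ℝ with −1 < ρ i < 1 for all i. Let X Y' : Fin d → ℝ be independent random vectors, each with i.i.d. standard Gaussian coordinates (the law of an unmatched pair of database rows). Then for every τ ∈ ℝ, P[L(X, Y') ≥ τ] ≤ Real.exp (−τ). -/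
open MeasureTheory ProbabilityTheory


open MeasureTheory ProbabilityTheory Real Complex
open scoped NNReal ENNReal

lemma integrable_rexp_quadratic {b : ℝ} (hb : b < 0) (c d : ℝ) :
    Integrable fun x : ℝ => rexp (b*x^2 + c*x + d) := by
  have h := (integrable_cexp_quadratic' (show (b:ℂ).re < 0 by simpa using hb) (c:ℂ) (d:ℂ)).norm
  have he : ∀ x : ℝ, ‖cexp ((b:ℂ)*x^2 + c*x + d)‖ = rexp (b*x^2 + c*x + d) := by
    intro x
    have : ((b:ℂ)*x^2 + c*x + d) = ((b*x^2 + c*x + d : ℝ) : ℂ) := by push_cast; ring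
    rw [this, Complex.norm_exp_ofReal]
  simpa only [he] using h

lemma integral_rexp_quadratic {b : ℝ} (hb : b < 0) (c d : ℝ) :
    ∫ x : ℝ, rexp (b*x^2 + c*x + d) = Real.sqrt (π / (-b)) * rexp (d - c^2/(4*b)) := by
  have hb' : b ≠ 0 := ne_of_lt hb
  have h : ∀ x : ℝ, rexp (b * x ^ 2 + c * x + d) =
      rexp (- -b * (x + c / (2 * b)) ^ 2) * rexp (d - c ^ 2 / (4 * b)) := by
    intro x
    rw [← Real.exp_add]
    congr 1
    field_simp
    ring
  simp_rw [h, integral_mul_const]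
  rw [integral_add_right_eq_self (fun x : ℝ => rexp (- -b * x ^ 2)) (c / (2 * b)),
    integral_gaussian]

noncomputable def stdG : Measure ℝ := gaussianReal 0 1

lemma stdG_eq : stdG = (volume : Measure ℝ).withDensity
    (fun x => ((Real.toNNReal (gaussianPDFReal 0 1 x) : ℝ≥0) : ℝ≥0∞)) := by
  rw [stdG, gaussianReal_of_var_ne_zero 0 one_ne_zero]
  rfl

lemma integral_stdG (g : ℝ → ℝ) :
    ∫ x, g x ∂stdG = ∫ x, gaussianPDFReal 0 1 x * g x := by
  rw [stdG_eq, integral_withDensity_eq_integral_smul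
    ((measurable_gaussianPDFReal 0 1).real_toNNReal)]
  congr 1
  ext x
  rw [NNReal.smul_def, smul_eq_mul, Real.coe_toNNReal _ (gaussianPDFReal_nonneg 0 1 x)]

lemma integrable_stdG_iff (g : ℝ → ℝ) :
    Integrable g stdG ↔ Integrable (fun x => gaussianPDFReal 0 1 x * g x) := by
  rw [stdG, gaussianReal_of_var_ne_zero 0 one_ne_zero,
    integrable_withDensity_iff (measurable_gaussianPDF 0 1)
      (Filter.Eventually.of_forall fun x => ENNReal.ofReal_lt_top)]
  constructor <;> intro h <;> [skip; skip] <;>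
  · apply h.congr
    filter_upwards with x
    rw [gaussianPDF, ENNReal.toReal_ofReal (gaussianPDFReal_nonneg 0 1 x)]
    ring

lemma gPDF_one (x : ℝ) : gaussianPDFReal 0 1 x = (Real.sqrt (2*π))⁻¹ * rexp (-(x^2)/2) := by
  rw [gaussianPDFReal]
  norm_num

lemma inner_key {r : ℝ} (hr : r^2 < 1) (a : ℝ) :
    Integrable (fun b => rexp (-(1/2) * Real.log (1-r^2)
      - (r^2*(a^2+b^2) - 2*r*a*b)/(2*(1-r^2)))) stdG ∧
    ∫ b, rexp (-(1/2) * Real.log (1-r^2)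
      - (r^2*(a^2+b^2) - 2*r*a*b)/(2*(1-r^2))) ∂stdG = 1 := by
  set s := 1 - r^2 with hs_def
  have hs : 0 < s := by simpa [hs_def] using hr
  have hB : -(1/(2*s)) < 0 := neg_lt_zero.mpr (by positivity)
  have key : ∀ b : ℝ, gaussianPDFReal 0 1 b * rexp (-(1/2) * Real.log s
      - (r^2*(a^2+b^2) - 2*r*a*b)/(2*s))
      = (Real.sqrt (2*π))⁻¹ * rexp ((-(1/(2*s)))*b^2 + (r*a/s)*b
          + (-(1/2) * Real.log s - r^2*a^2/(2*s))) := by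
    intro b
    rw [gPDF_one, mul_assoc, ← Real.exp_add]
    congr 2
    have hrs : r^2 = 1 - s := by rw [hs_def]; ring
    rw [hrs]
    field_simp
    ring
  constructor
  · rw [integrable_stdG_iff]
    refine Integrable.congr (f := fun b : ℝ => (Real.sqrt (2*π))⁻¹
      * rexp ((-(1/(2*s)))*b^2 + (r*a/s)*b + (-(1/2)*Real.log s - r^2*a^2/(2*s))))
      ((integrable_rexp_quadratic hB _ _).const_mul _) ?_
    filter_upwards with b
    exact (key b).symm
  · rw [integral_stdG]
    simp_rw [key]
    rw [integral_const_mul, integral_rexp_quadratic hB]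
    have h1 : -(1/2) * Real.log s - r^2*a^2/(2*s) - (r*a/s)^2/(4*(-(1/(2*s))))
        = -(1/2) * Real.log s := by field_simp; ring
    rw [h1]
    have h2 : rexp (-(1/2) * Real.log s) = (Real.sqrt s)⁻¹ := by
      rw [show -(1/2) * Real.log s = -(Real.log (Real.sqrt s)) by
        rw [Real.log_sqrt hs.le]; ring]
      rw [Real.exp_neg, Real.exp_log (Real.sqrt_pos.mpr hs)]
    rw [h2]
    have h3 : Real.sqrt (π / (1/(2*s))) = Real.sqrt (2*π) * Real.sqrt s := by
      rw [← Real.sqrt_mul (by positivity)]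
      congr 1
      field_simp
    rw [show π / -(-(1/(2*s))) = π / (1/(2*s)) by ring_nf, h3]
    have hps : Real.sqrt s ≠ 0 := ne_of_gt (Real.sqrt_pos.mpr hs)
    have hp2 : Real.sqrt (2*π) ≠ 0 := ne_of_gt (Real.sqrt_pos.mpr (by positivity))
    field_simp

instance : IsProbabilityMeasure stdG := by unfold stdG; infer_instance

noncomputable def Gp (r : ℝ) : ℝ × ℝ → ℝ := fun p =>
  rexp (-(1/2) * Real.log (1-r^2) - (r^2*(p.1^2+p.2^2) - 2*r*p.1*p.2)/(2*(1-r^2)))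

lemma Gp_continuous (r : ℝ) : Continuous (Gp r) := by unfold Gp; fun_prop

lemma Gp_inner {r : ℝ} (hr : r^2 < 1) (a : ℝ) :
    Integrable (fun b => Gp r (a, b)) stdG ∧ ∫ b, Gp r (a, b) ∂stdG = 1 := inner_key hr a

lemma pair_key {r : ℝ} (hr : r^2 < 1) :
    Integrable (Gp r) (stdG.prod stdG) ∧ ∫ p, Gp r p ∂(stdG.prod stdG) = 1 := by
  have hmeas : AEStronglyMeasurable (Gp r) (stdG.prod stdG) :=
    (Gp_continuous r).aestronglyMeasurable
  have hnorm : ∀ a, ∫ b, ‖Gp r (a, b)‖ ∂stdG = 1 := by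
    intro a
    rw [← (Gp_inner hr a).2]
    congr 1
    ext b
    exact Real.norm_of_nonneg (Real.exp_nonneg _)
  have hint : Integrable (Gp r) (stdG.prod stdG) := by
    rw [integrable_prod_iff hmeas]
    refine ⟨Filter.Eventually.of_forall fun a => (Gp_inner hr a).1, ?_⟩
    simp_rw [hnorm]
    exact integrable_const 1
  refine ⟨hint, ?_⟩
  rw [integral_prod _ hint]
  simp_rw [show ∀ a, ∫ b, Gp r (a, b) ∂stdG = 1 from fun a => (Gp_inner hr a).2]
  simp

section PiLemmas

variable {E : Type*} [MeasurableSpace E] {μ : Measure E} [IsProbabilityMeasure μ]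

lemma integrable_pi_prod {n : ℕ} {f : Fin n → E → ℝ} (hf : ∀ i, Integrable (f i) μ) :
    Integrable (fun x : Fin n → E => ∏ i, f i (x i)) (Measure.pi fun _ => μ) := by
  induction n with
  | zero => simpa using integrable_const (μ := Measure.pi fun _ : Fin 0 => μ) (1 : ℝ)
  | succ n ih =>
    have h := (measurePreserving_piFinSuccAbove (fun _ : Fin (n+1) => μ) 0).symm
    rw [← h.integrable_comp_emb (MeasurableEquiv.measurableEmbedding _)]
    simp_rw [MeasurableEquiv.piFinSuccAbove_symm_apply, Fin.insertNthEquiv,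
      Fin.prod_univ_succ, Fin.insertNth_zero, Equiv.coe_fn_mk, Function.comp_def,
      Fin.cons_zero, Fin.cons_succ]
    exact Integrable.mul_prod (hf 0) (ih fun i => hf i.succ)

lemma integral_pi_prod {n : ℕ} (f : Fin n → E → ℝ) :
    ∫ x : Fin n → E, ∏ i, f i (x i) ∂(Measure.pi fun _ => μ) = ∏ i, ∫ x, f i x ∂μ := by
  induction n with
  | zero =>
    simp only [Finset.univ_eq_empty, Finset.prod_empty, integral_const, measure_univ,
      ENNReal.toReal_one, smul_eq_mul, mul_one, one_smul, probReal_univ]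
  | succ n ih =>
    calc ∫ x : Fin (n+1) → E, ∏ i, f i (x i) ∂(Measure.pi fun _ => μ)
        = ∫ p : E × (Fin n → E), f 0 p.1 * ∏ i : Fin n, f i.succ (p.2 i)
            ∂(μ.prod (Measure.pi fun _ => μ)) := by
          rw [← ((measurePreserving_piFinSuccAbove (fun _ : Fin (n+1) => μ) 0).symm).integral_comp']
          congr 1
          funext x
          simp [MeasurableEquiv.piFinSuccAbove, Fin.insertNthEquiv, Fin.prod_univ_succ,
            Fin.insertNth_zero, Fin.zero_succAbove]
      _ = (∫ x, f 0 x ∂μ) * ∏ i : Fin n, ∫ x, f i.succ x ∂μ := by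
          rw [← ih fun i => f i.succ, ← integral_prod_mul]
      _ = ∏ i, ∫ x, f i x ∂μ := by rw [Fin.prod_univ_succ]

end PiLemmas


/-- False-positive bound: for an unmatched pair (independent standard Gaussian
vectors), the probability that the log-likelihood ratio exceeds `τ` is at most
`exp(−τ)`. -/
theorem false_positive_bound
    {Ω : Type*} [MeasurableSpace Ω] (P : Measure Ω) [IsProbabilityMeasure P]
    (d : ℕ) (ρ : Fin d → ℝ) (hρ : ∀ i, -1 < ρ i ∧ ρ i < 1)
    (X Y' : Ω → Fin d → ℝ)
    (hlaw : Measure.map (fun ω => (X ω, Y' ω)) P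
      = (Measure.pi fun _ : Fin d => gaussianReal 0 1).prod
        (Measure.pi fun _ : Fin d => gaussianReal 0 1))
    (L : (Fin d → ℝ) → (Fin d → ℝ) → ℝ)
    (hL : ∀ x y, L x y = ∑ i, (-(1/2) * Real.log (1 - (ρ i)^2)
      - ((ρ i)^2 * ((x i)^2 + (y i)^2) - 2 * ρ i * x i * y i) / (2 * (1 - (ρ i)^2))))
    (τ : ℝ) :
    (P {ω | L (X ω) (Y' ω) ≥ τ}).toReal ≤ Real.exp (-τ) := by
  have hri : ∀ i, (ρ i)^2 < 1 := fun i => by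
    have h := hρ i
    nlinarith [h.1, h.2]
  set γpi : Measure (Fin d → ℝ) := Measure.pi fun _ : Fin d => stdG with hγpi
  have hlaw' : Measure.map (fun ω => (X ω, Y' ω)) P = γpi.prod γpi := hlaw
  -- the product-form likelihood ratio
  set F : (Fin d → ℝ) × (Fin d → ℝ) → ℝ := fun p => ∏ i, Gp (ρ i) (p.1 i, p.2 i) with hF
  have hFL : ∀ p : (Fin d → ℝ) × (Fin d → ℝ), rexp (L p.1 p.2) = F p := by
    intro p
    rw [hL, Real.exp_sum]
    rfl
  have hFcont : Continuous F := by
    apply continuous_finset_prod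
    intro i _
    exact (Gp_continuous (ρ i)).comp (by fun_prop)
  -- transport along the arrow-product equivalence
  have mp := measurePreserving_arrowProdEquivProdArrow ℝ ℝ (Fin d)
    (fun _ => stdG) (fun _ => stdG)
  have hcomp : ∀ z : Fin d → ℝ × ℝ,
      F (MeasurableEquiv.arrowProdEquivProdArrow ℝ ℝ (Fin d) z) = ∏ i, Gp (ρ i) (z i) := by
    intro z
    simp only [hF, MeasurableEquiv.arrowProdEquivProdArrow, Equiv.arrowProdEquivProdArrow,
      MeasurableEquiv.coe_mk, Equiv.coe_fn_mk]
  have hFint : Integrable F (γpi.prod γpi) := by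
    rw [← mp.integrable_comp_emb (MeasurableEquiv.measurableEmbedding _)]
    have : (F ∘ (MeasurableEquiv.arrowProdEquivProdArrow ℝ ℝ (Fin d)))
        = fun z : Fin d → ℝ × ℝ => ∏ i, Gp (ρ i) (z i) := by
      funext z; exact hcomp z
    rw [this]
    exact integrable_pi_prod fun i => (pair_key (hri i)).1
  have hFintegral : ∫ p, F p ∂(γpi.prod γpi) = 1 := by
    rw [← mp.integral_comp']
    simp_rw [hcomp]
    rw [integral_pi_prod]
    simp_rw [fun i => (pair_key (hri i)).2]
    simp
  -- the pair map is a.e.-measurable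
  have hae : AEMeasurable (fun ω => (X ω, Y' ω)) P := by
    by_contra h
    rw [Measure.map_of_not_aemeasurable h] at hlaw'
    have : (γpi.prod γpi) Set.univ = 1 := measure_univ
    rw [← hlaw'] at this
    simp at this
  -- integrability and integral of exp(L) under P
  set f : Ω → ℝ := fun ω => rexp (L (X ω) (Y' ω)) with hf
  have hFmeas : AEStronglyMeasurable F (Measure.map (fun ω => (X ω, Y' ω)) P) :=
    hFcont.aestronglyMeasurable
  have hf_int : Integrable f P := by
    have := (integrable_map_measure hFmeas hae).mp (by rw [hlaw']; exact hFint)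
    apply this.congr
    filter_upwards with ω
    exact (hFL (X ω, Y' ω)).symm
  have hf_integral : ∫ ω, f ω ∂P = 1 := by
    have h1 : ∫ p, F p ∂(Measure.map (fun ω => (X ω, Y' ω)) P)
        = ∫ ω, F (X ω, Y' ω) ∂P := integral_map hae hFmeas
    rw [hlaw', hFintegral] at h1
    rw [hf]
    simp_rw [fun ω => hFL (X ω, Y' ω)]
    exact h1.symm
  -- Markov's inequality
  have hset : {ω | L (X ω) (Y' ω) ≥ τ} = {ω | rexp τ ≤ f ω} := by
    ext ω
    simp only [Set.mem_setOf_eq, hf, ge_iff_le, Real.exp_le_exp]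
  have hmarkov := mul_meas_ge_le_integral_of_nonneg
    (Filter.Eventually.of_forall fun ω => (Real.exp_pos _).le) hf_int (rexp τ)
  rw [hf_integral] at hmarkov
  rw [hset]
  have hexp : (0:ℝ) < rexp τ := Real.exp_pos τ
  rw [Real.exp_neg]
  calc (P {ω | rexp τ ≤ f ω}).toReal
      = (rexp τ)⁻¹ * (rexp τ * (P {ω | rexp τ ≤ f ω}).toReal) := by
        field_simp
    _ ≤ (rexp τ)⁻¹ * 1 := by
        apply mul_le_mul_of_nonneg_left hmarkov (by positivity)
    _ = (rexp τ)⁻¹ := mul_one _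
end

section
/- In the canonical correlated Gaussian pair setting, the log-likelihood ratio evaluated on a matched pair has variance Var[L(X, Y)] = ∑ i, (ρ i)^2 = σ_XY². Equivalently, for each coordinate i, the random variable Z_i := (ρ i)^2 * ((X i)^2 + (Y i)^2) − 2 * ρ i * X i * Y i satisfies E[Z_i] = 0 and E[Z_i^2] = 4 * (ρ i)^2 * (1 − (ρ i)^2)^2, and the coordinates are independent. -/
open MeasureTheory ProbabilityTheory

section VLLRAux
open Real Set Filter

noncomputable def G (k : ℕ) : ℝ := ∫ x : ℝ, x ^ k * Real.exp (-x^2/2)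

lemma intG (k : ℕ) : Integrable (fun x : ℝ => x ^ k * Real.exp (-x^2/2)) := by
  have h := integrable_rpow_mul_exp_neg_mul_sq (b := 1/2) (by norm_num) (s := k)
    (lt_of_lt_of_le (by norm_num) (Nat.cast_nonneg k))
  convert h using 2 with x
  rw [Real.rpow_natCast]
  ring_nf

lemma G_zero : G 0 = Real.sqrt (2 * Real.pi) := by
  have h := integral_gaussian (1/2)
  simp only [G, pow_zero, one_mul]
  rw [show (Real.pi / (1/2)) = 2 * Real.pi by ring] at h
  rw [← h]
  congr 1 with x
  ring_nf

lemma G_odd (k : ℕ) (hk : Odd k) : G k = 0 := by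
  have h := integral_neg_eq_self (fun x : ℝ => x ^ k * Real.exp (-x^2/2)) volume
  have h2 : ∀ x : ℝ, (-x) ^ k * Real.exp (-(-x)^2/2) = -(x ^ k * Real.exp (-x^2/2)) := by
    intro x
    rw [hk.neg_pow]
    ring_nf
  simp only [h2] at h
  rw [integral_neg] at h
  have : G k = -G k := by simpa [G] using h.symm
  linarith

lemma G_step (k : ℕ) : G (k + 2) = (k + 1) * G k := by
  set F : ℝ → ℝ := fun x => x ^ (k+1) * Real.exp (-x^2/2) with hF
  set F' : ℝ → ℝ := fun x => (k+1 : ℝ) * (x ^ k * Real.exp (-x^2/2))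
      - x ^ (k+2) * Real.exp (-x^2/2) with hF'
  have hderiv : ∀ x : ℝ, HasDerivAt F (F' x) x := by
    intro x
    have h1 : HasDerivAt (fun x : ℝ => x ^ (k+1)) ((k+1 : ℝ) * x ^ k) x := by
      simpa using hasDerivAt_pow (k+1) x
    have h3 : HasDerivAt (fun x : ℝ => -x^2/2) (-x) x := by
      have := ((hasDerivAt_pow 2 x).neg.div_const 2)
      refine this.congr_deriv ?_
      push_cast
      ring
    have h2 : HasDerivAt (fun x : ℝ => Real.exp (-x^2/2)) (Real.exp (-x^2/2) * (-x)) x :=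
      h3.exp
    have := h1.mul h2
    refine this.congr_deriv ?_
    simp only [hF']
    ring
  have hcont : Continuous F := by fun_prop
  have htop : Tendsto F atTop (nhds 0) := by
    have h := tendsto_pow_mul_exp_neg_atTop_nhds_zero (k+1)
    apply tendsto_of_tendsto_of_tendsto_of_le_of_le' tendsto_const_nhds h
    · filter_upwards [eventually_ge_atTop (0:ℝ)] with x hx
      positivity
    · filter_upwards [eventually_ge_atTop (2:ℝ)] with x hx
      have hx0 : (0:ℝ) ≤ x := by linarith
      have : Real.exp (-x^2/2) ≤ Real.exp (-x) := by
        apply Real.exp_le_exp.2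
        nlinarith
      exact mul_le_mul_of_nonneg_left this (by positivity)
  have hbot : Tendsto F atBot (nhds 0) := by
    have h : Tendsto (fun x : ℝ => F (-x)) atTop (nhds 0) := by
      have heq : (fun x : ℝ => F (-x))
          = fun x : ℝ => ((-1:ℝ)^(k+1)) * (x^(k+1) * Real.exp (-x^2/2)) := by
        funext x
        simp only [hF]
        ring_nf
      rw [heq]
      simpa using htop.const_mul ((-1:ℝ)^(k+1))
    have := h.comp tendsto_neg_atBot_atTop
    exact this.congr (fun x => by simp)
  have hint : Integrable F' := ((intG k).const_mul _).sub (intG (k+2))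
  have hIoi : ∫ x in Ioi (0:ℝ), F' x = 0 - F 0 :=
    integral_Ioi_of_hasDerivAt_of_tendsto (hcont.continuousWithinAt)
      (fun x _ => hderiv x) hint.integrableOn htop
  have hIic : ∫ x in Iic (0:ℝ), F' x = F 0 - 0 :=
    integral_Iic_of_hasDerivAt_of_tendsto (hcont.continuousWithinAt)
      (fun x _ => hderiv x) hint.integrableOn hbot
  have htot : ∫ x : ℝ, F' x = 0 := by
    rw [← intervalIntegral.integral_Iic_add_Ioi hint.integrableOn hint.integrableOn, hIoi, hIic]
    ring
  rw [hF', integral_sub ((intG k).const_mul _) (intG (k+2)), integral_const_mul] at htot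
  have : (k+1 : ℝ) * G k - G (k+2) = 0 := htot
  linarith [this]

lemma G_two : G 2 = Real.sqrt (2 * Real.pi) := by
  have := G_step 0
  simpa [G_zero] using this

lemma G_four : G 4 = 3 * Real.sqrt (2 * Real.pi) := by
  have := G_step 2
  rw [G_two] at this
  norm_num at this ⊢
  linarith

lemma sqrt2pi_pos : 0 < Real.sqrt (2 * Real.pi) :=
  Real.sqrt_pos.2 (by positivity)

lemma hpdf01 : ∀ x, gaussianPDFReal 0 1 x = (Real.sqrt (2 * Real.pi))⁻¹ * Real.exp (-x^2/2) := by
  intro x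
  rw [gaussianPDFReal]
  norm_num

lemma gauss_density : gaussianReal 0 1
    = volume.withDensity fun x => ((gaussianPDFReal 0 1 x).toNNReal : ENNReal) := by
  rw [gaussianReal_of_var_ne_zero 0 one_ne_zero]
  rfl

lemma integrable_pow_gauss (k : ℕ) :
    Integrable (fun x : ℝ => x ^ k) (gaussianReal 0 1) := by
  rw [gauss_density, integrable_withDensity_iff_integrable_smul
    ((measurable_gaussianPDFReal 0 1).real_toNNReal)]
  have : (fun x : ℝ => (gaussianPDFReal 0 1 x).toNNReal • x ^ k)
      = fun x : ℝ => (Real.sqrt (2 * Real.pi))⁻¹ * (x ^ k * Real.exp (-x^2/2)) := by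
    funext x
    rw [NNReal.smul_def, Real.coe_toNNReal _ (gaussianPDFReal_nonneg 0 1 x), hpdf01, smul_eq_mul]
    ring
  rw [this]
  exact (intG k).const_mul _

lemma integral_pow_gauss (k : ℕ) :
    ∫ x, x ^ k ∂(gaussianReal 0 1) = (Real.sqrt (2 * Real.pi))⁻¹ * G k := by
  rw [gauss_density, integral_withDensity_eq_integral_smul
    ((measurable_gaussianPDFReal 0 1).real_toNNReal)]
  have : (fun x : ℝ => (gaussianPDFReal 0 1 x).toNNReal • x ^ k)
      = fun x : ℝ => (Real.sqrt (2 * Real.pi))⁻¹ * (x ^ k * Real.exp (-x^2/2)) := by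
    funext x
    rw [NNReal.smul_def, Real.coe_toNNReal _ (gaussianPDFReal_nonneg 0 1 x), hpdf01, smul_eq_mul]
    ring
  rw [this, integral_const_mul]
  rfl

lemma M0 : ∫ x, x ^ 0 ∂(gaussianReal 0 1) = 1 := by
  rw [integral_pow_gauss, G_zero, inv_mul_cancel₀ sqrt2pi_pos.ne']

lemma M1 : ∫ x, x ^ 1 ∂(gaussianReal 0 1) = 0 := by
  rw [integral_pow_gauss, G_odd 1 ⟨0, rfl⟩, mul_zero]

lemma M2 : ∫ x, x ^ 2 ∂(gaussianReal 0 1) = 1 := by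
  rw [integral_pow_gauss, G_two, inv_mul_cancel₀ sqrt2pi_pos.ne']

lemma M3 : ∫ x, x ^ 3 ∂(gaussianReal 0 1) = 0 := by
  rw [integral_pow_gauss, G_odd 3 ⟨1, rfl⟩, mul_zero]

lemma M4 : ∫ x, x ^ 4 ∂(gaussianReal 0 1) = 3 := by
  rw [integral_pow_gauss, G_four]
  field_simp

noncomputable def nu2 : Measure (ℝ × ℝ) := (gaussianReal 0 1).prod (gaussianReal 0 1)

instance : IsProbabilityMeasure nu2 := by unfold nu2; infer_instance

lemma I_mono (j k : ℕ) : Integrable (fun p : ℝ × ℝ => p.1 ^ j * p.2 ^ k) nu2 :=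
  (integrable_pow_gauss j).mul_prod (integrable_pow_gauss k)

lemma M_mono (j k : ℕ) : ∫ p, p.1 ^ j * p.2 ^ k ∂nu2
    = (∫ x, x ^ j ∂(gaussianReal 0 1)) * (∫ x, x ^ k ∂(gaussianReal 0 1)) :=
  integral_prod_mul _ _

noncomputable def Zf (r : ℝ) : ℝ × ℝ → ℝ := fun p =>
  r^2 * (p.1^2 + (r * p.1 + Real.sqrt (1 - r^2) * p.2)^2)
    - 2 * r * p.1 * (r * p.1 + Real.sqrt (1 - r^2) * p.2)

lemma Zf_cont (r : ℝ) : Continuous (Zf r) := by unfold Zf; fun_prop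

lemma Zf_eq (r : ℝ) (h1 : -1 < r) (h2 : r < 1) : Zf r = fun p =>
    (r^2*(1-r^2)) * (p.1^0 * p.2^2) - (r^2*(1-r^2)) * (p.1^2 * p.2^0)
      - (2*r*(1-r^2)*Real.sqrt (1-r^2)) * (p.1^1 * p.2^1) := by
  have hs2 : (Real.sqrt (1-r^2))^2 = 1 - r^2 := Real.sq_sqrt (by nlinarith)
  funext p
  simp only [Zf, pow_zero, pow_one, one_mul, mul_one]
  linear_combination (r^2 * p.2^2) * hs2

lemma Zf_int (r : ℝ) (h1 : -1 < r) (h2 : r < 1) : Integrable (Zf r) nu2 := by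
  rw [Zf_eq r h1 h2]
  exact (((I_mono 0 2).const_mul _).sub ((I_mono 2 0).const_mul _)).sub
    ((I_mono 1 1).const_mul _)

lemma Zf_mean (r : ℝ) (h1 : -1 < r) (h2 : r < 1) : ∫ p, Zf r p ∂nu2 = 0 := by
  rw [show (fun p => Zf r p) = Zf r from rfl, Zf_eq r h1 h2]
  set c1 := r^2*(1-r^2)
  set c3 := 2*r*(1-r^2)*Real.sqrt (1-r^2)
  have i1 : Integrable (fun p : ℝ × ℝ => c1 * (p.1^0 * p.2^2)) nu2 := (I_mono 0 2).const_mul _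
  have i2 : Integrable (fun p : ℝ × ℝ => c1 * (p.1^2 * p.2^0)) nu2 := (I_mono 2 0).const_mul _
  have i3 : Integrable (fun p : ℝ × ℝ => c3 * (p.1^1 * p.2^1)) nu2 := (I_mono 1 1).const_mul _
  have i12 : Integrable (fun p : ℝ × ℝ => c1 * (p.1^0 * p.2^2) - c1 * (p.1^2 * p.2^0)) nu2 :=
    i1.sub i2
  rw [integral_sub i12 i3, integral_sub i1 i2, integral_const_mul, integral_const_mul,
    integral_const_mul, M_mono, M_mono, M_mono, M0, M1, M2]
  ring

lemma Zf_sq_eq (r : ℝ) (h1 : -1 < r) (h2 : r < 1) : (fun p => (Zf r p)^2) = fun p =>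
    (r^2*(1-r^2))^2 * (p.1^4 * p.2^0) + (r^2*(1-r^2))^2 * (p.1^0 * p.2^4)
      + (4*r^2*(1-r^2)^3 - 2*(r^2*(1-r^2))^2) * (p.1^2 * p.2^2)
      + (2*(r^2*(1-r^2))*(2*r*(1-r^2)*Real.sqrt (1-r^2))) * (p.1^3 * p.2^1)
      + (-(2*(r^2*(1-r^2))*(2*r*(1-r^2)*Real.sqrt (1-r^2)))) * (p.1^1 * p.2^3) := by
  have hs2 : (Real.sqrt (1-r^2))^2 = 1 - r^2 := Real.sq_sqrt (by nlinarith)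
  funext p
  rw [Zf_eq r h1 h2]
  simp only [pow_zero, pow_one, one_mul, mul_one]
  linear_combination (4*r^2*(1-r^2)^2*p.1^2*p.2^2) * hs2

lemma Zf_sq_int (r : ℝ) (h1 : -1 < r) (h2 : r < 1) :
    Integrable (fun p => (Zf r p)^2) nu2 := by
  rw [Zf_sq_eq r h1 h2]
  exact (((((I_mono 4 0).const_mul _).add ((I_mono 0 4).const_mul _)).add
    ((I_mono 2 2).const_mul _)).add ((I_mono 3 1).const_mul _)).add
    ((I_mono 1 3).const_mul _)

lemma Zf_sq_mean (r : ℝ) (h1 : -1 < r) (h2 : r < 1) :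
    ∫ p, (Zf r p)^2 ∂nu2 = 4 * r^2 * (1 - r^2)^2 := by
  rw [Zf_sq_eq r h1 h2]
  set c1 := (r^2*(1-r^2))^2
  set c2 := 4*r^2*(1-r^2)^3 - 2*(r^2*(1-r^2))^2
  set c3 := 2*(r^2*(1-r^2))*(2*r*(1-r^2)*Real.sqrt (1-r^2))
  have i1 : Integrable (fun p : ℝ × ℝ => c1 * (p.1^4 * p.2^0)) nu2 := (I_mono 4 0).const_mul _
  have i2 : Integrable (fun p : ℝ × ℝ => c1 * (p.1^0 * p.2^4)) nu2 := (I_mono 0 4).const_mul _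
  have i3 : Integrable (fun p : ℝ × ℝ => c2 * (p.1^2 * p.2^2)) nu2 := (I_mono 2 2).const_mul _
  have i4 : Integrable (fun p : ℝ × ℝ => c3 * (p.1^3 * p.2^1)) nu2 := (I_mono 3 1).const_mul _
  have i5 : Integrable (fun p : ℝ × ℝ => (-c3) * (p.1^1 * p.2^3)) nu2 := (I_mono 1 3).const_mul _
  have i12 : Integrable (fun p : ℝ × ℝ => c1 * (p.1^4 * p.2^0) + c1 * (p.1^0 * p.2^4)) nu2 :=
    i1.add i2
  have i123 : Integrable (fun p : ℝ × ℝ => c1 * (p.1^4 * p.2^0) + c1 * (p.1^0 * p.2^4)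
      + c2 * (p.1^2 * p.2^2)) nu2 := i12.add i3
  have i1234 : Integrable (fun p : ℝ × ℝ => c1 * (p.1^4 * p.2^0) + c1 * (p.1^0 * p.2^4)
      + c2 * (p.1^2 * p.2^2) + c3 * (p.1^3 * p.2^1)) nu2 := i123.add i4
  rw [integral_add i1234 i5, integral_add i123 i4, integral_add i12 i3, integral_add i1 i2,
    integral_const_mul, integral_const_mul, integral_const_mul, integral_const_mul,
    integral_const_mul, M_mono, M_mono, M_mono, M_mono, M_mono, M0, M1, M2, M3, M4]
  ring

lemma prob_biInter_eq {ι Ω γ : Type*} [Fintype ι] [MeasurableSpace Ω] {P : Measure Ω}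
    [IsProbabilityMeasure P] [MeasurableSpace γ] {ν : Measure γ} [IsProbabilityMeasure ν]
    {g : Ω → ι → γ} (hg : AEMeasurable g P)
    (hmap : Measure.map g P = Measure.pi fun _ => ν)
    (S : Finset ι) (sets : ι → Set γ) (hsets : ∀ i ∈ S, MeasurableSet (sets i)) :
    P (⋂ i ∈ S, (fun ω => g ω i) ⁻¹' sets i) = ∏ i ∈ S, ν (sets i) := by
  classical
  set t : ι → Set γ := fun i => if i ∈ S then sets i else univ with ht
  have htm : ∀ i, MeasurableSet (t i) := by
    intro i
    by_cases hi : i ∈ S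
    · simpa [ht, hi] using hsets i hi
    · simp [ht, hi]
  have hset : (⋂ i ∈ S, (fun ω => g ω i) ⁻¹' sets i) = g ⁻¹' Set.pi univ t := by
    ext ω
    simp only [Set.mem_iInter, Set.mem_preimage, Set.mem_pi, Set.mem_univ, true_implies, ht]
    constructor
    · intro h i
      by_cases hi : i ∈ S
      · simpa [hi] using h i hi
      · simp [hi]
    · intro h i hi
      have := h i
      simpa [hi] using this
  rw [hset, ← Measure.map_apply_of_aemeasurable hg (MeasurableSet.univ_pi htm), hmap,
    Measure.pi_pi]
  rw [Finset.prod_congr rfl (g := fun i => if i ∈ S then ν (sets i) else 1)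
    (fun i _ => by by_cases hi : i ∈ S <;> simp [ht, hi]),
    Finset.prod_ite_mem, Finset.univ_inter]

lemma iIndepFun_eval_of_map_pi {ι Ω γ : Type*} [Fintype ι] [MeasurableSpace Ω] {P : Measure Ω}
    [IsProbabilityMeasure P] [MeasurableSpace γ] {ν : Measure γ} [IsProbabilityMeasure ν]
    {g : Ω → ι → γ} (hg : AEMeasurable g P)
    (hmap : Measure.map g P = Measure.pi fun _ => ν) :
    iIndepFun (fun i ω => g ω i) P := by
  classical
  rw [iIndepFun_iff_measure_inter_preimage_eq_mul]
  intro S sets hsets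
  rw [prob_biInter_eq hg hmap S sets hsets]
  refine Finset.prod_congr rfl fun i hi => ?_
  have := prob_biInter_eq hg hmap {i} sets (by simpa using hsets i hi)
  simpa using this.symm

lemma pi_map_eval {ι γ : Type*} [Fintype ι] [MeasurableSpace γ] (ν : Measure γ)
    [IsProbabilityMeasure ν] (i : ι) :
    Measure.map (fun f : ι → γ => f i) (Measure.pi fun _ => ν) = ν := by
  classical
  ext s hs
  rw [Measure.map_apply (measurable_pi_apply i) hs, Set.eval_preimage, Measure.pi_pi]
  rw [Finset.prod_eq_single i (fun j _ hj => by rw [Function.update_of_ne hj]; simp)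
    (by simp), Function.update_self]

end VLLRAux

/-- The log-likelihood ratio of a matched pair has variance `∑ᵢ ρᵢ² = σ_XY²`.
Coordinatewise, `Zᵢ := ρᵢ²(Xᵢ² + Yᵢ²) − 2ρᵢXᵢYᵢ` has mean `0` and second moment
`4ρᵢ²(1 − ρᵢ²)²`, and the coordinate pairs `(Xᵢ, Yᵢ)` are independent. -/
theorem variance_llr
    {Ω : Type*} [MeasurableSpace Ω] (P : Measure Ω) [IsProbabilityMeasure P]
    (d : ℕ) (ρ : Fin d → ℝ) (hρ : ∀ i, -1 < ρ i ∧ ρ i < 1)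
    (X W Y : Ω → Fin d → ℝ)
    (hlaw : Measure.map (fun ω => (X ω, W ω)) P
      = (Measure.pi fun _ : Fin d => gaussianReal 0 1).prod
        (Measure.pi fun _ : Fin d => gaussianReal 0 1))
    (hY : ∀ ω i, Y ω i = ρ i * X ω i + Real.sqrt (1 - (ρ i)^2) * W ω i)
    (L : (Fin d → ℝ) → (Fin d → ℝ) → ℝ)
    (hL : ∀ x y, L x y = ∑ i, (-(1/2) * Real.log (1 - (ρ i)^2)
      - ((ρ i)^2 * ((x i)^2 + (y i)^2) - 2 * ρ i * x i * y i) / (2 * (1 - (ρ i)^2))))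
    (Z : Fin d → Ω → ℝ)
    (hZ : ∀ i ω, Z i ω = (ρ i)^2 * ((X ω i)^2 + (Y ω i)^2) - 2 * ρ i * X ω i * Y ω i) :
    variance (fun ω => L (X ω) (Y ω)) P = ∑ i, (ρ i)^2 ∧
    (∀ i, ∫ ω, Z i ω ∂P = 0) ∧
    (∀ i, ∫ ω, (Z i ω)^2 ∂P = 4 * (ρ i)^2 * (1 - (ρ i)^2)^2) ∧
    iIndepFun (fun i ω => (X ω i, Y ω i)) P := by
  classical
  have hρ1 : ∀ i, (0:ℝ) < 1 - (ρ i)^2 := fun i => by nlinarith [(hρ i).1, (hρ i).2]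
  -- a.e.-measurability of the joint map
  have hT : AEMeasurable (fun ω => (X ω, W ω)) P := by
    by_contra h
    rw [Measure.map_of_not_aemeasurable h] at hlaw
    have := congrArg (fun m : Measure ((Fin d → ℝ) × (Fin d → ℝ)) => m Set.univ) hlaw
    simp [measure_univ] at this
  set e := MeasurableEquiv.arrowProdEquivProdArrow ℝ ℝ (Fin d) with he
  set T' : Ω → Fin d → ℝ × ℝ := fun ω => e.symm (X ω, W ω) with hT'def
  have hT' : AEMeasurable T' P := e.symm.measurable.comp_aemeasurable hT
  have hmapT' : Measure.map T' P = Measure.pi fun _ : Fin d => nu2 := by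
    have h1 : Measure.map T' P
        = Measure.map e.symm (Measure.map (fun ω => (X ω, W ω)) P) :=
      (AEMeasurable.map_map_of_aemeasurable e.symm.measurable.aemeasurable hT).symm
    rw [h1, hlaw]
    exact (MeasurePreserving.symm e (measurePreserving_arrowProdEquivProdArrow ℝ ℝ (Fin d)
      (fun _ => gaussianReal 0 1) (fun _ => gaussianReal 0 1))).map_eq
  have hT'eval : ∀ (ω : Ω) (i : Fin d), T' ω i = (X ω i, W ω i) := fun ω i => rfl
  set κ : Fin d → Ω → ℝ × ℝ := fun i ω => (X ω i, W ω i) with hκdef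
  have hκae : ∀ i, AEMeasurable (κ i) P := fun i => by
    have : κ i = (fun f : Fin d → ℝ × ℝ => f i) ∘ T' := rfl
    rw [this]
    exact (measurable_pi_apply i).comp_aemeasurable hT'
  have hκmap : ∀ i, Measure.map (κ i) P = nu2 := by
    intro i
    have : κ i = (fun f : Fin d → ℝ × ℝ => f i) ∘ T' := rfl
    rw [this, ← AEMeasurable.map_map_of_aemeasurable (measurable_pi_apply i).aemeasurable hT',
      hmapT', pi_map_eval]
  -- independence of the pairs
  have hIndepXW : iIndepFun (fun i ω => T' ω i) P :=
    iIndepFun_eval_of_map_pi hT' hmapT'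
  set ψ : Fin d → ℝ × ℝ → ℝ × ℝ :=
    fun i q => (q.1, ρ i * q.1 + Real.sqrt (1 - (ρ i)^2) * q.2) with hψdef
  have hψ : ∀ i, Measurable (ψ i) := fun i => by
    apply Measurable.prodMk measurable_fst
    exact (measurable_const.mul measurable_fst).add (measurable_const.mul measurable_snd)
  have hPairs : iIndepFun (fun i ω => (X ω i, Y ω i)) P := by
    have hfe : (fun (i : Fin d) (ω : Ω) => (X ω i, Y ω i))
        = fun i => (ψ i) ∘ (fun ω => T' ω i) := by
      funext i ω
      simp only [hψdef, Function.comp_apply, hT'eval]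
      rw [hY ω i]
    rw [hfe]
    exact hIndepXW.comp ψ hψ
  -- pointwise identification of Z with Zf ∘ κ
  have hZpt : ∀ (i : Fin d) (ω : Ω), Z i ω = Zf (ρ i) (κ i ω) := by
    intro i ω
    rw [hZ i ω, hY ω i]
    rfl
  have hsm : ∀ i, AEStronglyMeasurable (Zf (ρ i)) (Measure.map (κ i) P) := fun i =>
    (Zf_cont (ρ i)).aestronglyMeasurable
  have hsm2 : ∀ i, AEStronglyMeasurable (fun p => (Zf (ρ i) p)^2) (Measure.map (κ i) P) :=
    fun i => ((Zf_cont (ρ i)).pow 2).aestronglyMeasurable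
  -- conjunct 2 : means
  have hmean : ∀ i, ∫ ω, Z i ω ∂P = 0 := by
    intro i
    have key := integral_map (hκae i) (hsm i)
    rw [hκmap i] at key
    have h1 : ∫ ω, Z i ω ∂P = ∫ ω, Zf (ρ i) (κ i ω) ∂P :=
      integral_congr_ae (Filter.Eventually.of_forall fun ω => hZpt i ω)
    rw [h1, ← key]
    exact Zf_mean (ρ i) (hρ i).1 (hρ i).2
  -- conjunct 3 : second moments
  have hsqmean : ∀ i, ∫ ω, (Z i ω)^2 ∂P = 4 * (ρ i)^2 * (1 - (ρ i)^2)^2 := by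
    intro i
    have key := integral_map (hκae i) (hsm2 i)
    rw [hκmap i] at key
    have h1 : ∫ ω, (Z i ω)^2 ∂P = ∫ ω, (Zf (ρ i) (κ i ω))^2 ∂P :=
      integral_congr_ae (Filter.Eventually.of_forall fun ω => by simp only [hZpt])
    rw [h1, ← key]
    exact Zf_sq_mean (ρ i) (hρ i).1 (hρ i).2
  -- integrability of Z and Z²
  have hintZ : ∀ i, Integrable (fun ω => Z i ω) P := by
    intro i
    have h := (integrable_map_measure (hsm i) (hκae i)).1
      (by rw [hκmap i]; exact Zf_int (ρ i) (hρ i).1 (hρ i).2)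
    exact h.congr (Filter.Eventually.of_forall fun ω => (hZpt i ω).symm)
  have hintZ2 : ∀ i, Integrable (fun ω => (Z i ω)^2) P := by
    intro i
    have h := (integrable_map_measure (hsm2 i) (hκae i)).1
      (by rw [hκmap i]; exact Zf_sq_int (ρ i) (hρ i).1 (hρ i).2)
    exact h.congr (Filter.Eventually.of_forall fun ω => by
      simp only [Function.comp_apply, hZpt])
  -- the summands of L
  set c : Fin d → ℝ := fun i => -(1/2) * Real.log (1 - (ρ i)^2) with hcdef
  set eC : Fin d → ℝ := fun i => -(1/(2*(1-(ρ i)^2))) with heCdef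
  set g : Fin d → Ω → ℝ := fun i ω => c i + eC i * Z i ω with hgdef
  have hfsum : (fun ω => L (X ω) (Y ω)) = ∑ i, g i := by
    funext ω
    rw [hL, Finset.sum_apply]
    refine Finset.sum_congr rfl fun i _ => ?_
    rw [← hZ i ω]
    show _ = c i + eC i * Z i ω
    rw [hcdef, heCdef]
    have hne : (1 - (ρ i)^2) ≠ 0 := (hρ1 i).ne'
    field_simp
    ring
  have hgsm : ∀ i, AEStronglyMeasurable (g i) P := by
    intro i
    have hgi : g i = (fun q : ℝ × ℝ => c i + eC i * Zf (ρ i) q) ∘ (κ i) := by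
      funext ω
      simp only [hgdef, Function.comp_apply, hZpt i ω]
    rw [hgi]
    exact ((continuous_const.add (continuous_const.mul (Zf_cont (ρ i)))).measurable.comp_aemeasurable
      (hκae i)).aestronglyMeasurable
  have hgMem : ∀ i, MemLp (g i) 2 P := by
    intro i
    rw [memLp_two_iff_integrable_sq (hgsm i)]
    have hx : (fun ω => g i ω ^ 2) = fun ω => (c i^2)
        + ((2 * c i * eC i) * Z i ω + (eC i^2) * (Z i ω)^2) := by
      funext ω
      simp only [hgdef]
      ring
    rw [hx]
    exact (integrable_const _).add (((hintZ i).const_mul _).add ((hintZ2 i).const_mul _))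
  have hIndepg : iIndepFun g P := by
    set φ : Fin d → ℝ × ℝ → ℝ := fun i q =>
      c i + eC i * ((ρ i)^2 * (q.1^2 + q.2^2) - 2 * ρ i * q.1 * q.2) with hφdef
    have hφ : ∀ i, Measurable (φ i) := fun i => by
      apply Measurable.add measurable_const
      apply Measurable.const_mul
      exact ((measurable_fst.pow_const 2).add (measurable_snd.pow_const 2)).const_mul _
        |>.sub (((measurable_fst.const_mul _).mul measurable_snd))
    have hge : g = fun i => (φ i) ∘ (fun ω => (X ω i, Y ω i)) := by
      funext i ω
      simp only [hgdef, hφdef, Function.comp_apply]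
      rw [hZ i ω]
    rw [hge]
    exact hPairs.comp φ hφ
  -- the variance
  have hvar : variance (fun ω => L (X ω) (Y ω)) P = ∑ i, (ρ i)^2 := by
    rw [hfsum, IndepFun.variance_sum (fun i _ => hgMem i)
      (fun i _ j _ hij => hIndepg.indepFun hij)]
    refine Finset.sum_congr rfl fun i _ => ?_
    rw [variance_eq_sub (hgMem i)]
    have hEg : ∫ ω, g i ω ∂P = c i := by
      have h1 : (fun ω => g i ω) = fun ω => c i + eC i * Z i ω := rfl
      rw [h1, integral_add (integrable_const _) ((hintZ i).const_mul _),
        integral_const, integral_const_mul, hmean i]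
      simp [measure_univ]
    have hEg2 : ∫ ω, (g i ω)^2 ∂P
        = c i^2 + (2 * c i * eC i) * 0 + eC i^2 * (4 * (ρ i)^2 * (1 - (ρ i)^2)^2) := by
      have hx : (fun ω => g i ω ^ 2) = fun ω => (c i^2)
          + ((2 * c i * eC i) * Z i ω + (eC i^2) * (Z i ω)^2) := by
        funext ω
        simp only [hgdef]
        ring
      have ia : Integrable (fun ω => (2 * c i * eC i) * Z i ω) P := (hintZ i).const_mul _
      have ib : Integrable (fun ω => (eC i^2) * (Z i ω)^2) P := (hintZ2 i).const_mul _
      have iab : Integrable (fun ω => (2 * c i * eC i) * Z i ω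
          + (eC i^2) * (Z i ω)^2) P := ia.add ib
      rw [hx, integral_add (integrable_const _) iab, integral_add ia ib,
        integral_const, integral_const_mul, integral_const_mul, hmean i, hsqmean i]
      simp [measure_univ]
    have hgoal1 : (P[(g i) ^ 2] : ℝ) = ∫ ω, (g i ω)^2 ∂P := by
      apply integral_congr_ae
      exact Filter.Eventually.of_forall fun ω => by simp [Pi.pow_apply]
    rw [hgoal1, hEg2]
    have : P[g i] = ∫ ω, g i ω ∂P := rfl
    rw [this, hEg, heCdef]
    have hne : (1 - (ρ i)^2) ≠ 0 := (hρ1 i).ne'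
    field_simp
    ring
  exact ⟨hvar, hmean, hsqmean, hPairs⟩
end

section
/- Let k ∈ ℕ, μ δ : ℝ with 0 ≤ δ ≤ μ, and let z : Fin (2 * k) → ℝ be such that μ − δ ≤ z j ≤ μ + δ for all j and (∑ j, z j) = (2 * k) * μ (the sequence has mean μ). Then ∏ j, z j ≥ (μ − δ)^k * (μ + δ)^k. -/
/-- A sequence of `2k` reals with mean `μ` and entries in `[μ - δ, μ + δ]`
has product at least `(μ - δ)^k * (μ + δ)^k`. -/
theorem prod_ge_of_mean_of_mem_interval (k : ℕ) (μ δ : ℝ) (hδ : 0 ≤ δ) (hδμ : δ ≤ μ)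
    (z : Fin (2 * k) → ℝ) (hz : ∀ j, μ - δ ≤ z j ∧ z j ≤ μ + δ)
    (hsum : (∑ j, z j) = (2 * k : ℕ) * μ) :
    ∏ j, z j ≥ (μ - δ) ^ k * (μ + δ) ^ k := by
  rcases Nat.eq_zero_or_pos k with hk | hk
  · subst hk; simp
  rcases eq_or_lt_of_le hδ with hδ0 | hδ0
  · -- δ = 0 : all z j = μ
    have hzμ : ∀ j, z j = μ := fun j => le_antisymm (by have := (hz j).2; linarith [hδ0])
      (by have := (hz j).1; linarith [hδ0])
    rw [Finset.prod_congr rfl (fun j _ => hzμ j), Finset.prod_const]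
    simp only [Finset.card_univ, Fintype.card_fin, ← hδ0, sub_zero, add_zero, ← pow_add]
    rw [two_mul]
  rcases eq_or_lt_of_le hδμ with hμδ | hμδ
  · -- μ = δ : RHS = 0
    rw [← hμδ, sub_self, zero_pow hk.ne', zero_mul]
    exact Finset.prod_nonneg fun j _ => by have := (hz j).1; linarith [hμδ]
  -- main case: 0 < δ < μ
  set a := μ - δ with hadef
  set b := μ + δ with hbdef
  have ha : 0 < a := by simp [hadef]; linarith
  have hb : 0 < b := by simp [hbdef]; linarith
  have hba : b - a = 2 * δ := by simp [hadef, hbdef]; ring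
  have hba0 : (0:ℝ) < b - a := by rw [hba]; linarith
  have hzpos : ∀ j, 0 < z j := fun j => lt_of_lt_of_le ha (hz j).1
  have key : ∀ j, (b - z j)/(b-a) * Real.log a + (z j - a)/(b-a) * Real.log b
      ≤ Real.log (z j) := by
    intro j
    obtain ⟨h1, h2⟩ := hz j
    have hs : 0 ≤ (b - z j)/(b-a) := div_nonneg (by linarith) hba0.le
    have ht : 0 ≤ (z j - a)/(b-a) := div_nonneg (by linarith) hba0.le
    have hst : (b - z j)/(b-a) + (z j - a)/(b-a) = 1 := by
      field_simp
      ring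
    have := (strictConcaveOn_log_Ioi.concaveOn).2 (Set.mem_Ioi.2 ha) (Set.mem_Ioi.2 hb)
      hs ht hst
    simpa only [smul_eq_mul, show (b - z j)/(b-a) * a + (z j - a)/(b-a) * b = z j by
      field_simp; ring] using this
  have e2 : ∑ j, (z j - a)/(b-a) = k := by
    rw [← Finset.sum_div, Finset.sum_sub_distrib, Finset.sum_const, Finset.card_univ,
      Fintype.card_fin, hsum, hba]
    have : ((2*k:ℕ):ℝ) = 2*k := by push_cast; ring
    rw [this, hadef]
    field_simp
    ring
  have e1 : ∑ j, (b - z j)/(b-a) = k := by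
    rw [← Finset.sum_div, Finset.sum_sub_distrib, Finset.sum_const, Finset.card_univ,
      Fintype.card_fin, hsum, hba]
    have : ((2*k:ℕ):ℝ) = 2*k := by push_cast; ring
    rw [this, hbdef]
    field_simp
    ring
  have hsumlog : (k:ℝ) * Real.log a + (k:ℝ) * Real.log b ≤ ∑ j, Real.log (z j) := by
    calc (k:ℝ) * Real.log a + (k:ℝ) * Real.log b
        = ∑ j, ((b - z j)/(b-a) * Real.log a + (z j - a)/(b-a) * Real.log b) := by
          rw [Finset.sum_add_distrib, ← Finset.sum_mul, ← Finset.sum_mul, e1, e2]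
      _ ≤ ∑ j, Real.log (z j) := Finset.sum_le_sum fun j _ => key j
  calc a ^ k * b ^ k = Real.exp ((k:ℝ) * Real.log a + (k:ℝ) * Real.log b) := by
        rw [Real.exp_add, Real.exp_nat_mul, Real.exp_nat_mul, Real.exp_log ha, Real.exp_log hb]
    _ ≤ Real.exp (∑ j, Real.log (z j)) := Real.exp_le_exp.2 hsumlog
    _ = ∏ j, z j := by
        rw [Real.exp_sum]
        exact Finset.prod_congr rfl fun j _ => Real.exp_log (hzpos j)
end
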